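/- arXiv:2405.08201 — 6 statements merged into one kernel-verified Lean document; each statement's English description precedes it below -/
import Mathlib

section
/- Critical Grönwall-type lemma for two-parameter functions (Lemma B.1): Let (E,‖·‖) be a normed real vector space, ℓ>0, C₁,C₂ ≥ 0 and η ∈ (0,1). Suppose f : {(s,t) : 0 ≤ s ≤ t ≤ 1} → E satisfies: (i) f is bounded, f_{0,0} = 0, and for all 0 ≤ s ≤ t ≤ 1 with t−s ≤ ℓ, ‖f_{s,t}‖ ≤ C₁·(M_{s,t}+η)·(t−s)^{1/2} + C₂·(M_{s,t}+η)·|log(M_{s,t}+η)|·(t−s), where M_{s,t} := sup_{r∈[s,t]} ‖f_{0,r}‖; (ii) for all 0 ≤ s ≤ t ≤ 1, ‖f_{0,t}‖ − ‖f_{0,s}‖ ≤ ‖f_{s,t}‖. Then for every δ ∈ (0, e^{−C₂}) there exists η̄ > 0, depending only on C₁, C₂, ℓ and δ, such that whenever η < η̄ and f satisfies (i)–(ii), one has sup_{t∈[0,1]} ‖f_{0,t}‖ ≤ η^{e^{−C₂}−δ}. -/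
/-!
Write `m(t) = sup_{[0,t]} ‖f_{0,·}‖ + η` and `λ = -log m`, so `λ(0) = L := -log η`. While
`m ≤ e⁻¹`, the map `x ↦ -x log x` is increasing, and (i), (ii) give on a step of length `h`
`m(t) ≤ m(s) + m(t) (C₁ √h + C₂ λ(t) h)`, i.e. `λ(t) ≥ (1 - a) λ(s) - c` with `a ≈ C₂ h` and
`c ≈ C₁ √h`. After `k ≈ 1/h` steps, `λ ≥ L e^{-C₂} - C₁/√h`; taking `h = L^{-3/2}` makes the loss
`o(L)` while `C₂ L h → 0`, whence `m ≤ η^{e^{-C₂} - δ}`. The a priori condition `m ≤ e⁻¹` is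
propagated along `[0,1]` in steps on which `m` increases by less than `e⁻¹ - η^{e^{-C₂} - δ}`,
which exist because (i) and boundedness make `m` uniformly continuous.
-/

open Real Set Filter Topology

namespace Real

theorem monotoneOn_negMulLog : MonotoneOn negMulLog (Icc 0 (exp (-1))) := by
  refine monotoneOn_of_deriv_nonneg (convex_Icc _ _) continuous_negMulLog.continuousOn
    (differentiableOn_negMulLog.mono fun x hx => ?_) fun x hx => ?_
  · simp only [interior_Icc] at hx
    exact hx.1.ne'
  · simp only [interior_Icc] at hx
    rw [deriv_negMulLog hx.1.ne']
    have : log x ≤ -1 := by rw [log_le_iff_le_exp hx.1]; exact hx.2.le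
    linarith

theorem exp_neg_mul_div_le_one_sub_pow {a : ℝ} (ha : a < 1) (n : ℕ) :
    exp (-(n * (a / (1 - a)))) ≤ (1 - a) ^ n := by
  have h1a : 0 < 1 - a := by linarith
  have hlog : -(a / (1 - a)) ≤ log (1 - a) := by
    have := one_sub_inv_le_log_of_pos h1a
    have e : 1 - (1 - a)⁻¹ = -(a / (1 - a)) := by field_simp; ring
    linarith
  calc exp (-(n * (a / (1 - a)))) = exp (-(a / (1 - a))) ^ n := by
        rw [← exp_nat_mul]; ring_nf
    _ ≤ exp (log (1 - a)) ^ n := by gcongr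
    _ = (1 - a) ^ n := by rw [exp_log h1a]

theorem neg_log_sub_div_le {x y z q : ℝ} (hy : 0 < y) (hx : 0 ≤ x) (hxq : x ≤ q) (hq : q < 1)
    (h : y * (1 - x) ≤ z) : -log z - x / (1 - q) ≤ -log y := by
  have h1x : 0 < 1 - x := by linarith
  have hlog : log y + log (1 - x) ≤ log z := by
    rw [← log_mul hy.ne' h1x.ne']; exact log_le_log (by positivity) h
  have hinv := one_sub_inv_le_log_of_pos h1x
  have : x / (1 - x) ≤ x / (1 - q) := div_le_div_of_nonneg_left hx (by linarith) (by linarith)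
  have e : 1 - (1 - x)⁻¹ = -(x / (1 - x)) := by field_simp; ring
  linarith

theorem mul_abs_log_le_one_add_sq {x : ℝ} (hx : 0 < x) : x * |log x| ≤ 1 + x ^ 2 := by
  rcases le_or_gt x 1 with hx1 | hx1
  · have := abs_log_mul_self_lt x hx hx1
    rw [abs_mul, abs_of_pos hx] at this
    nlinarith [sq_nonneg x]
  · rw [abs_of_pos (log_pos hx1)]
    have := log_le_sub_one_of_pos hx
    nlinarith

end Real

theorem mul_pow_sub_le_of_recurrence {g : ℝ → ℝ} {T h a c L : ℝ} (hh : 0 ≤ h) (ha : 0 ≤ a)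
    (ha1 : a ≤ 1) (hc : 0 ≤ c) (hg0 : L ≤ g 0)
    (hstep : ∀ s t, 0 ≤ s → s ≤ t → t ≤ T → t - s ≤ h → (1 - a) * g s - c ≤ g t) :
    ∀ k : ℕ, ∀ t, 0 ≤ t → t ≤ T → t ≤ k * h → L * (1 - a) ^ k - k * c ≤ g t := by
  intro k
  induction k with
  | zero =>
    intro t ht0 _ htk
    obtain rfl : t = 0 := by simp only [Nat.cast_zero, zero_mul] at htk; linarith
    simpa using hg0
  | succ k ih =>
    intro t ht0 htT htk
    set s := max (t - h) 0
    have hs : L * (1 - a) ^ k - k * c ≤ g s :=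
      ih s (le_max_right _ _) ((max_le (by linarith) ht0).trans htT)
        (max_le (by push_cast at htk; linarith) (by positivity))
    have hts := hstep s t (le_max_right _ _) (max_le (by linarith) ht0) htT
      (by linarith [le_max_left (t - h) 0])
    have : 0 ≤ 1 - a := by linarith
    calc L * (1 - a) ^ (k + 1) - (k + 1 : ℕ) * c
        ≤ (1 - a) * (L * (1 - a) ^ k - k * c) - c := by
          have : 0 ≤ a * (k * c) := by positivity
          push_cast; rw [pow_succ]; linarith
      _ ≤ (1 - a) * g s - c := by gcongr
      _ ≤ g t := hts

theorem neg_log_recurrence_of_step {ms mt η C₁ C₂ d h q : ℝ} (hC₁ : 0 ≤ C₁) (hC₂ : 0 ≤ C₂)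
    (hη : 0 < η) (hηs : η ≤ ms) (hst : ms ≤ mt) (ht1 : mt ≤ 1) (hd : 0 ≤ d) (hdh : d ≤ h)
    (hq : C₁ * √h + C₂ * (-log η) * h ≤ q) (hq1 : q < 1)
    (hstep : mt ≤ ms + C₁ * mt * √d + C₂ * negMulLog mt * d) :
    (1 - C₂ * h / (1 - q)) * (-log ms) - C₁ * √h / (1 - q) ≤ -log mt := by
  have hms : 0 < ms := hη.trans_le hηs
  have hmt : 0 < mt := hms.trans_le hst
  have hts : -log mt ≤ -log ms := neg_le_neg (log_le_log hms hst)
  have hsη : -log ms ≤ -log η := neg_le_neg (log_le_log hη hηs)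
  have ht0 : 0 ≤ -log mt := neg_nonneg.2 (log_nonpos hmt.le ht1)
  set x := C₁ * √d + C₂ * (-log mt) * d
  have hx0 : 0 ≤ x := by positivity
  have hxs : x ≤ C₁ * √h + C₂ * (-log ms) * h := by
    have : (-log mt) * d ≤ (-log ms) * h := mul_le_mul hts hdh hd (ht0.trans hts)
    simp only [x, mul_assoc]; gcongr
  have hxq : x ≤ q := hxs.trans <| hq.trans' <| by
    have : 0 ≤ h := hd.trans hdh
    gcongr
  have hlog := neg_log_sub_div_le (z := ms) hmt hx0 hxq hq1 <| by
    simp only [negMulLog] at hstep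
    linear_combination hstep
  have : x / (1 - q) ≤ (C₁ * √h + C₂ * (-log ms) * h) / (1 - q) :=
    div_le_div_of_nonneg_right hxs (by linarith)
  have e : (1 - C₂ * h / (1 - q)) * (-log ms) - C₁ * √h / (1 - q)
      = -log ms - (C₁ * √h + C₂ * (-log ms) * h) / (1 - q) := by
    field_simp [(by linarith : (1 - q) ≠ 0)]; ring
  linarith

theorem neg_log_ge_of_step {m : ℝ → ℝ} {η C₁ C₂ h q T : ℝ} (hC₁ : 0 ≤ C₁) (hC₂ : 0 ≤ C₂)
    (hη : 0 < η) (hm0 : m 0 = η) (hmono : MonotoneOn m (Icc 0 T))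
    (hm1 : ∀ t, 0 ≤ t → t ≤ T → m t ≤ 1) (hh : 0 ≤ h)
    (hq : C₁ * √h + C₂ * (-log η) * h ≤ q) (hq1 : q < 1) (ha : C₂ * h / (1 - q) ≤ 1)
    (hstep : ∀ s t, 0 ≤ s → s ≤ t → t ≤ T → t - s ≤ h →
      m t ≤ m s + C₁ * m t * √(t - s) + C₂ * negMulLog (m t) * (t - s))
    (k : ℕ) {t : ℝ} (ht0 : 0 ≤ t) (htT : t ≤ T) (htk : t ≤ k * h) :
    -log η * (1 - C₂ * h / (1 - q)) ^ k - k * (C₁ * √h / (1 - q)) ≤ -log (m t) := by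
  have hq0 : 0 < 1 - q := by linarith
  refine mul_pow_sub_le_of_recurrence (g := fun t => -log (m t)) hh (by positivity) ha
    (by positivity) (by simp [hm0])
    (fun s t hs hst htT hts => ?_) k t ht0 htT htk
  have hsT : s ≤ T := hst.trans htT
  have hηs : η ≤ m s := hm0 ▸ hmono ⟨le_rfl, hs.trans hsT⟩ ⟨hs, hsT⟩ hs
  exact neg_log_recurrence_of_step hC₁ hC₂ hη hηs (hmono ⟨hs, hsT⟩ ⟨hs.trans hst, htT⟩ hst)
    (hm1 t (hs.trans hst) htT) (by linarith) hts hq hq1 (hstep s t hs hst htT hts)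

theorem le_of_bootstrap {m : ℝ → ℝ} {θ₁ θ₂ d : ℝ} (hd : 0 < d) (hm0 : m 0 ≤ θ₂)
    (hjump : ∀ s t, 0 ≤ s → s ≤ t → t ≤ 1 → t - s ≤ d → m t ≤ m s + (θ₂ - θ₁))
    (hboot : ∀ T, 0 ≤ T → T ≤ 1 → (∀ u, 0 ≤ u → u ≤ T → m u ≤ θ₂) → m T ≤ θ₁) :
    ∀ t, 0 ≤ t → t ≤ 1 → m t ≤ θ₂ := by
  have key : ∀ k : ℕ, ∀ t, 0 ≤ t → t ≤ 1 → t ≤ k * d → m t ≤ θ₂ := by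
    intro k
    induction k with
    | zero =>
      intro t ht0 _ htk
      obtain rfl : t = 0 := by simp only [Nat.cast_zero, zero_mul] at htk; linarith
      exact hm0
    | succ k ih =>
      intro t ht0 ht1 htk
      rcases le_or_gt t (k * d) with htk' | hkt
      · exact ih t ht0 ht1 htk'
      · have hk0 : 0 ≤ (k : ℝ) * d := by positivity
        have := hjump _ t hk0 hkt.le ht1 (by push_cast at htk; linarith)
        have := hboot _ hk0 (by linarith) fun u hu0 hu => ih u hu0 (by linarith) hu
        linarith
  intro t ht0 ht1
  refine key ⌈1 / d⌉₊ t ht0 ht1 ?_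
  calc t ≤ 1 := ht1
    _ = 1 / d * d := by field_simp
    _ ≤ ⌈1 / d⌉₊ * d := by gcongr; exact Nat.le_ceil _

/-- Admissible data for `k` steps of length `h` of the recursion `λ ↦ (1 - a) λ - c` started
from `L`, where `a = C₂ h / (1 - q)` and `c = C₁ √h / (1 - q)`. -/
def IsGronwallStep (ℓ C₁ C₂ α L h q : ℝ) (k : ℕ) : Prop :=
  0 < h ∧ h ≤ ℓ ∧ 1 ≤ k * h ∧ C₁ * √h + C₂ * L * h ≤ q ∧ q < 1 ∧ C₂ * h / (1 - q) ≤ 1 ∧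
    α * L ≤ L * (1 - C₂ * h / (1 - q)) ^ k - k * (C₁ * √h / (1 - q))

/-- A lower bound for `L⁻¹` times that iterate when `h = w⁶`, `L = w⁻⁴`. -/

noncomputable def gronwallRate (C₁ C₂ w : ℝ) : ℝ :=
  exp (-((1 + w ^ 6) * C₂ / (1 - (C₁ * w ^ 3 + C₂ * w ^ 2) - C₂ * w ^ 6)))
    - (1 + w ^ 6) * C₁ * w / (1 - (C₁ * w ^ 3 + C₂ * w ^ 2))

theorem tendsto_gronwallRate (C₁ C₂ : ℝ) :
    Tendsto (gronwallRate C₁ C₂) (𝓝 0) (𝓝 (exp (-C₂))) := by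
  have : ContinuousAt (gronwallRate C₁ C₂) 0 := by
    unfold gronwallRate
    fun_prop (disch := norm_num)
  simpa [gronwallRate] using this.tendsto

theorem isGronwallStep_of_small {ℓ C₁ C₂ α L w : ℝ} (hC₁ : 0 ≤ C₁) (hC₂ : 0 ≤ C₂) (hw : 0 < w)
    (hwL : w ^ 4 * L = 1) (hq : C₁ * w ^ 3 + C₂ * w ^ 2 < 1 / 2) (hC₂w : C₂ * w ^ 6 ≤ 1 / 2)
    (hwℓ : w ^ 6 ≤ ℓ) (hα : α < gronwallRate C₁ C₂ w) :
    IsGronwallStep ℓ C₁ C₂ α L (w ^ 6) (C₁ * w ^ 3 + C₂ * w ^ 2) ⌈1 / w ^ 6⌉₊ := by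
  set q := C₁ * w ^ 3 + C₂ * w ^ 2
  have hL : 0 < L := pos_of_mul_pos_right (hwL ▸ one_pos) (by positivity)
  have hsqrt : √(w ^ 6) = w ^ 3 := by
    rw [show w ^ 6 = (w ^ 3) ^ 2 by ring, sqrt_sq (by positivity)]
  have hq0 : 1 - q ≠ 0 := by linarith
  have hk : (⌈1 / w ^ 6⌉₊ : ℝ) ≤ 1 / w ^ 6 + 1 := (Nat.ceil_lt_add_one (by positivity)).le
  refine ⟨by positivity, hwℓ, ?_, ?_, by linarith, ?_, ?_⟩
  · calc (1 : ℝ) = 1 / w ^ 6 * w ^ 6 := by field_simp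
      _ ≤ ⌈1 / w ^ 6⌉₊ * w ^ 6 := by gcongr; exact Nat.le_ceil _
  · rw [hsqrt]
    exact (by linear_combination (C₂ * w ^ 2) * hwL : C₁ * w ^ 3 + C₂ * L * w ^ 6 = q).le
  · rw [div_le_one (by linarith)]; linarith
  rw [hsqrt]
  set a := C₂ * w ^ 6 / (1 - q)
  set c := C₁ * w ^ 3 / (1 - q)
  have ha : a < 1 := by rw [div_lt_one (by linarith)]; linarith
  have ha0 : 0 ≤ a / (1 - a) :=
    div_nonneg (div_nonneg (by positivity) (by linarith)) (by linarith)
  have hc : 0 ≤ c := div_nonneg (by positivity) (by linarith)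
  have e1 : (1 / w ^ 6 + 1) * (a / (1 - a)) = (1 + w ^ 6) * C₂ / (1 - q - C₂ * w ^ 6) := by
    have : 1 - q - C₂ * w ^ 6 ≠ 0 := by linarith
    simp only [a]; field_simp
  have e2 : (1 / w ^ 6 + 1) * c * w ^ 4 = (1 + w ^ 6) * C₁ * w / (1 - q) := by
    simp only [c]; field_simp
  have hrate : L * gronwallRate C₁ C₂ w
      = L * exp (-((1 / w ^ 6 + 1) * (a / (1 - a)))) - (1 / w ^ 6 + 1) * c := by
    rw [show gronwallRate C₁ C₂ w = exp (-((1 + w ^ 6) * C₂ / (1 - q - C₂ * w ^ 6)))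
      - (1 + w ^ 6) * C₁ * w / (1 - q) from rfl, ← e1, ← e2]
    linear_combination (-(1 / w ^ 6 + 1) * c) * hwL
  have hexp : exp (-((1 / w ^ 6 + 1) * (a / (1 - a)))) ≤ (1 - a) ^ ⌈1 / w ^ 6⌉₊ :=
    (exp_le_exp.2 (by gcongr)).trans (exp_neg_mul_div_le_one_sub_pow ha _)
  have hkc : ⌈1 / w ^ 6⌉₊ * c ≤ (1 / w ^ 6 + 1) * c := by gcongr
  nlinarith [mul_le_mul_of_nonneg_left hexp hL.le]

theorem eventually_exists_isGronwallStep {ℓ C₁ C₂ α : ℝ} (hℓ : 0 < ℓ) (hC₁ : 0 ≤ C₁)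
    (hC₂ : 0 ≤ C₂) (hα : α < exp (-C₂)) :
    ∀ᶠ L in atTop, ∃ h q : ℝ, ∃ k : ℕ, IsGronwallStep ℓ C₁ C₂ α L h q k := by
  have hsmall : ∀ᶠ w in 𝓝 (0 : ℝ), α < gronwallRate C₁ C₂ w ∧
      C₁ * w ^ 3 + C₂ * w ^ 2 < 1 / 2 ∧ C₂ * w ^ 6 ≤ 1 / 2 ∧ w ^ 6 ≤ ℓ := by
    refine ((tendsto_gronwallRate C₁ C₂).eventually (lt_mem_nhds hα)).and ?_
    refine (Continuous.tendsto (by fun_prop) 0).eventually (gt_mem_nhds (by norm_num)) |>.and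
      ((Continuous.tendsto (by fun_prop) 0).eventually (ge_mem_nhds (by norm_num)) |>.and
        ((Continuous.tendsto (by fun_prop) 0).eventually (ge_mem_nhds (by simpa using hℓ))))
  filter_upwards [(tendsto_rpow_neg_atTop (by norm_num : (0 : ℝ) < 1 / 4)).eventually hsmall,
    eventually_gt_atTop 0] with L ⟨hα, hq, hC₂w, hwℓ⟩ hL
  refine ⟨_, _, _, isGronwallStep_of_small hC₁ hC₂ (rpow_pos_of_pos hL _) ?_ hq hC₂w hwℓ hα⟩
  rw [← rpow_natCast, ← rpow_mul hL.le]
  norm_num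
  rw [rpow_neg_one, inv_mul_cancel₀ hL.ne']

section normSup

variable {E : Type*} [NormedAddCommGroup E] {f : ℝ → ℝ → E} {B η ℓ C₁ C₂ s t : ℝ}

noncomputable def normSup (f : ℝ → ℝ → E) (s t : ℝ) : ℝ := ⨆ r : Icc s t, ‖f 0 r‖

def NormSubadditive (f : ℝ → ℝ → E) : Prop :=
  ∀ s t : ℝ, 0 ≤ s → s ≤ t → t ≤ 1 → ‖f 0 t‖ - ‖f 0 s‖ ≤ ‖f s t‖

def IsCriticalIncrementBound (f : ℝ → ℝ → E) (ℓ C₁ C₂ η : ℝ) : Prop :=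
  ∀ s t : ℝ, 0 ≤ s → s ≤ t → t ≤ 1 → t - s ≤ ℓ →
    ‖f s t‖ ≤ C₁ * (normSup f s t + η) * (t - s) ^ ((1 : ℝ) / 2)
      + C₂ * (normSup f s t + η) * |log (normSup f s t + η)| * (t - s)

theorem normSup_nonneg : 0 ≤ normSup f s t := Real.iSup_nonneg fun _ => norm_nonneg _

theorem normSup_le {c : ℝ} (h : ∀ u, s ≤ u → u ≤ t → ‖f 0 u‖ ≤ c) (hc : 0 ≤ c) :
    normSup f s t ≤ c :=
  Real.iSup_le (fun r => h r r.2.1 r.2.2) hc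

theorem norm_le_normSup (hB : ∀ r, 0 ≤ r → r ≤ 1 → ‖f 0 r‖ ≤ B) (hs : 0 ≤ s) (ht : t ≤ 1)
    {u : ℝ} (hsu : s ≤ u) (hut : u ≤ t) : ‖f 0 u‖ ≤ normSup f s t := by
  refine le_ciSup (f := fun r : Icc s t => ‖f 0 r‖) ⟨B, ?_⟩ ⟨u, hsu, hut⟩
  rintro _ ⟨r, rfl⟩
  exact hB r (hs.trans r.2.1) (r.2.2.trans ht)

theorem normSup_mono (hB : ∀ r, 0 ≤ r → r ≤ 1 → ‖f 0 r‖ ≤ B) {s' t' : ℝ} (hs' : 0 ≤ s')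
    (hs : s' ≤ s) (ht : t ≤ t') (ht' : t' ≤ 1) : normSup f s t ≤ normSup f s' t' :=
  normSup_le (fun _ hsu hut => norm_le_normSup hB hs' ht' (hs.trans hsu) (hut.trans ht))
    normSup_nonneg

theorem normSup_zero_zero (hf : f 0 0 = 0) : normSup f 0 0 = 0 :=
  le_antisymm (normSup_le (fun u hu0 hu => by rw [le_antisymm hu hu0, hf, norm_zero]) le_rfl)
    normSup_nonneg

theorem normSup_le_add_of_increment (hB : ∀ r, 0 ≤ r → r ≤ 1 → ‖f 0 r‖ ≤ B)
    (hii : NormSubadditive f) (hs : 0 ≤ s) (hst : s ≤ t) (ht : t ≤ 1) {D : ℝ} (hD0 : 0 ≤ D)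
    (hD : ∀ u, s ≤ u → u ≤ t → ‖f s u‖ ≤ D) : normSup f 0 t ≤ normSup f 0 s + D := by
  refine normSup_le (fun u hu0 hut => ?_) (add_nonneg normSup_nonneg hD0)
  rcases le_total u s with hus | hsu
  · linarith [norm_le_normSup hB le_rfl (hst.trans ht) hu0 hus]
  · linarith [hii s u hs hsu (hut.trans ht), hD u hsu hut,
      norm_le_normSup hB le_rfl (hst.trans ht) hs le_rfl]

theorem normSup_add_le_step (hB : ∀ r, 0 ≤ r → r ≤ 1 → ‖f 0 r‖ ≤ B) (hii : NormSubadditive f)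
    (hi : IsCriticalIncrementBound f ℓ C₁ C₂ η) (hC₁ : 0 ≤ C₁) (hC₂ : 0 ≤ C₂) (hη : 0 < η)
    (hs : 0 ≤ s) (hst : s ≤ t) (ht : t ≤ 1) (hℓ : t - s ≤ ℓ)
    (hsmall : normSup f 0 t + η ≤ exp (-1)) :
    normSup f 0 t + η ≤ normSup f 0 s + η + C₁ * (normSup f 0 t + η) * √(t - s)
      + C₂ * negMulLog (normSup f 0 t + η) * (t - s) := by
  set m := normSup f 0 t + η
  have hm0 : 0 < m := by linarith [normSup_nonneg (f := f) (s := 0) (t := t)]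
  have hm1 : m < 1 := hsmall.trans_lt (exp_lt_one_iff.2 (by norm_num))
  have hmlog : 0 ≤ negMulLog m := negMulLog_nonneg hm0.le hm1.le
  have hD0 : 0 ≤ C₁ * m * √(t - s) + C₂ * negMulLog m * (t - s) := by
    have : 0 ≤ t - s := by linarith
    positivity
  suffices normSup f 0 t ≤ normSup f 0 s + (C₁ * m * √(t - s) + C₂ * negMulLog m * (t - s)) by
    linarith
  refine normSup_le_add_of_increment hB hii hs hst ht hD0 fun u hsu hut => ?_
  set X := normSup f s u + η
  have hX0 : 0 < X := by linarith [normSup_nonneg (f := f) (s := s) (t := u)]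
  have hXm : X ≤ m := by linarith [normSup_mono hB le_rfl hs hut ht (f := f)]
  have hX1 : X < 1 := hXm.trans_lt hm1
  have hneg : negMulLog X ≤ negMulLog m :=
    monotoneOn_negMulLog ⟨hX0.le, hXm.trans hsmall⟩ ⟨hm0.le, hsmall⟩ hXm
  calc ‖f s u‖ ≤ C₁ * X * (u - s) ^ ((1 : ℝ) / 2) + C₂ * X * |log X| * (u - s) :=
        hi s u hs hsu (hut.trans ht) (by linarith)
    _ = C₁ * X * √(u - s) + C₂ * negMulLog X * (u - s) := by
        rw [sqrt_eq_rpow, abs_of_neg (log_neg hX0 hX1), negMulLog]; ring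
    _ ≤ C₁ * m * √(t - s) + C₂ * negMulLog m * (t - s) := by
        have := negMulLog_nonneg hX0.le hX1.le
        gcongr

theorem exists_normSup_le_add (hB : ∀ r, 0 ≤ r → r ≤ 1 → ‖f 0 r‖ ≤ B)
    (hii : NormSubadditive f) (hi : IsCriticalIncrementBound f ℓ C₁ C₂ η) (hC₁ : 0 ≤ C₁)
    (hC₂ : 0 ≤ C₂) (hℓ : 0 < ℓ) (hη : 0 < η) (hη1 : η ≤ 1) {ε : ℝ} (hε : 0 < ε) :
    ∃ d > 0, ∀ s t, 0 ≤ s → s ≤ t → t ≤ 1 → t - s ≤ d → normSup f 0 t ≤ normSup f 0 s + ε := by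
  have hB0 : 0 ≤ B := (norm_nonneg _).trans (hB 0 le_rfl zero_le_one)
  set φ : ℝ → ℝ := fun x => C₁ * (B + 1) * √x + C₂ * (1 + (B + 1) ^ 2) * x
  have : ∀ᶠ x in 𝓝 0, φ x < ε :=
    ((by fun_prop : Continuous φ).tendsto 0).eventually (gt_mem_nhds (by simpa [φ] using hε))
  obtain ⟨d, hd, hφ⟩ := Metric.eventually_nhds_iff.1 this
  refine ⟨min (d / 2) ℓ, by positivity, fun s t hs hst ht hdst =>
    normSup_le_add_of_increment hB hii hs hst ht hε.le fun u hsu hut => ?_⟩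
  have hus : u - s ≤ min (d / 2) ℓ := by linarith
  set X := normSup f s u + η
  have hX0 : 0 < X := by linarith [normSup_nonneg (f := f) (s := s) (t := u)]
  have hXB : X ≤ B + 1 := add_le_add
    (normSup_le (fun r hsr hru => hB r (hs.trans hsr) (hru.trans (hut.trans ht))) hB0) hη1
  refine le_of_lt ?_
  calc ‖f s u‖ ≤ C₁ * X * (u - s) ^ ((1 : ℝ) / 2) + C₂ * (X * |log X|) * (u - s) := by
        rw [← mul_assoc]; exact hi s u hs hsu (hut.trans ht) (hus.trans (min_le_right _ _))
    _ ≤ φ (u - s) := by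
        rw [← sqrt_eq_rpow]
        simp only [φ]
        have : 0 ≤ u - s := by linarith
        gcongr
        exact (mul_abs_log_le_one_add_sq hX0).trans (by gcongr)
    _ < ε := hφ <| by
        rw [dist_zero_right, norm_of_nonneg (by linarith)]
        linarith [min_le_left (d / 2) ℓ]

theorem normSup_add_le_exp_of_isGronwallStep (hB : ∀ r, 0 ≤ r → r ≤ 1 → ‖f 0 r‖ ≤ B)
    (hii : NormSubadditive f) (hi : IsCriticalIncrementBound f ℓ C₁ C₂ η) (hf : f 0 0 = 0)
    (hC₁ : 0 ≤ C₁) (hC₂ : 0 ≤ C₂) (hη : 0 < η) {α h q : ℝ} {k : ℕ}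
    (hstep : IsGronwallStep ℓ C₁ C₂ α (-log η) h q k) {T : ℝ} (hT0 : 0 ≤ T) (hT1 : T ≤ 1)
    (hsmall : ∀ t, 0 ≤ t → t ≤ T → normSup f 0 t + η ≤ exp (-1)) :
    normSup f 0 T + η ≤ exp (-(α * -log η)) := by
  obtain ⟨hh, hhℓ, hkh, hq, hq1, ha, hiter⟩ := hstep
  have hlog := neg_log_ge_of_step (m := fun t => normSup f 0 t + η) hC₁ hC₂ hη
    (by simp [normSup_zero_zero hf])
    (fun s _ t ht hst => by linarith [normSup_mono hB le_rfl le_rfl hst (ht.2.trans hT1) (f := f)])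
    (fun t ht0 htT => (hsmall t ht0 htT).trans (exp_le_one_iff.2 (by norm_num))) hh.le
    hq hq1 ha
    (fun s t hs hst htT hts => normSup_add_le_step hB hii hi hC₁ hC₂ hη hs hst (htT.trans hT1)
      (by linarith) (hsmall t (hs.trans hst) htT))
    k hT0 le_rfl (by linarith)
  rw [← log_le_iff_le_exp (by linarith [normSup_nonneg (f := f) (s := 0) (t := T)])]
  linarith

end normSup

theorem critical_gronwall_two_parameter_general
    {E : Type*} [NormedAddCommGroup E]
    (ℓ C₁ C₂ : ℝ) (hℓ : 0 < ℓ) (hC₁ : 0 ≤ C₁) (hC₂ : 0 ≤ C₂)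
    (δ : ℝ) (hδ : 0 < δ) (hδ' : δ < Real.exp (-C₂)) :
    ∃ ηBar : ℝ, 0 < ηBar ∧
      ∀ η : ℝ, 0 < η → η < 1 → η < ηBar →
      ∀ f : ℝ → ℝ → E,
        -- (i) boundedness
        (∃ B : ℝ, ∀ s t : ℝ, 0 ≤ s → s ≤ t → t ≤ 1 → ‖f s t‖ ≤ B) →
        -- (i) f_{0,0} = 0
        f 0 0 = 0 →
        -- (i) the increment bound, with M_{s,t} = sup_{r ∈ [s,t]} ‖f_{0,r}‖
        (∀ s t : ℝ, 0 ≤ s → s ≤ t → t ≤ 1 → t - s ≤ ℓ →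
          ‖f s t‖ ≤
            C₁ * ((⨆ r : Icc s t, ‖f 0 (r : ℝ)‖) + η) * (t - s) ^ ((1 : ℝ) / 2)
            + C₂ * ((⨆ r : Icc s t, ‖f 0 (r : ℝ)‖) + η)
                * |Real.log ((⨆ r : Icc s t, ‖f 0 (r : ℝ)‖) + η)| * (t - s)) →
        -- (ii)
        (∀ s t : ℝ, 0 ≤ s → s ≤ t → t ≤ 1 → ‖f 0 t‖ - ‖f 0 s‖ ≤ ‖f s t‖) →
        -- conclusion: sup_{t ∈ [0,1]} ‖f_{0,t}‖ ≤ η^{e^{-C₂} - δ}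
        ∀ t : ℝ, 0 ≤ t → t ≤ 1 → ‖f 0 t‖ ≤ η ^ (Real.exp (-C₂) - δ) := by
  set α := exp (-C₂) - δ
  have hα : 0 < α := by linarith
  obtain ⟨L₁, hL₁⟩ := ((eventually_exists_isGronwallStep hℓ hC₁ hC₂ (sub_lt_self _ hδ)).and
    ((tendsto_id.const_mul_atTop hα).eventually_gt_atTop 1)).exists_forall_of_atTop
  refine ⟨exp (-L₁), exp_pos _, fun η hη hη1 hηL f ⟨B, hB⟩ hf00 hi hii => ?_⟩
  obtain ⟨⟨h, q, k, hstep⟩, hαL⟩ := hL₁ (-log η) (by linarith [(log_lt_iff_lt_exp hη).2 hηL])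
  simp only [id] at hαL
  have hB0 : ∀ r, 0 ≤ r → r ≤ 1 → ‖f 0 r‖ ≤ B := fun r => hB 0 r le_rfl
  have hdecay := fun T (hT0 : 0 ≤ T) hT1 =>
    normSup_add_le_exp_of_isGronwallStep hB0 hii hi hf00 hC₁ hC₂ hη hstep hT0 hT1
  have hgap : exp (-(α * -log η)) < exp (-1) := exp_lt_exp.2 (by linarith)
  obtain ⟨d, hd, hjump⟩ := exists_normSup_le_add hB0 hii hi hC₁ hC₂ hℓ hη hη1.le (sub_pos.2 hgap)
  have hm0 : normSup f 0 0 + η ≤ exp (-1) := by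
    have : α ≤ 1 := by linarith [exp_le_one_iff.2 (neg_nonpos.2 hC₂)]
    rw [normSup_zero_zero hf00, zero_add, ← log_le_iff_le_exp hη]
    nlinarith
  have hsmall := le_of_bootstrap (m := fun t => normSup f 0 t + η) hd hm0
    (fun s t hs hst ht hts => by linarith [hjump s t hs hst ht hts]) hdecay
  intro t ht0 ht1
  calc ‖f 0 t‖ ≤ normSup f 0 t + η := by
        linarith [norm_le_normSup hB0 le_rfl ht1 ht0 le_rfl (f := f)]
    _ ≤ exp (-(α * -log η)) :=
        hdecay t ht0 ht1 fun u hu0 hut => hsmall u hu0 (hut.trans ht1)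
    _ = η ^ α := by rw [rpow_def_of_pos hη]; ring_nf

/-- **Critical Grönwall-type lemma for two-parameter functions** (Lemma B.1).
Let `(E,‖·‖)` be a normed real vector space, `ℓ > 0`, `C₁, C₂ ≥ 0`.  For every
`δ ∈ (0, e^{-C₂})` there exists `ηBar > 0` (depending only on `C₁, C₂, ℓ, δ`) such that
for every `η ∈ (0,1)` with `η < ηBar` and every `f : Δ_{[0,1]} → E` which is bounded,
satisfies `f₀₀ = 0`, the increment bound (i) (with
`M_{s,t} = sup_{r ∈ [s,t]} ‖f_{0,r}‖`) on intervals of length at most `ℓ`, and the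
monotonicity condition (ii), one has `sup_{t ∈ [0,1]} ‖f_{0,t}‖ ≤ η^{e^{-C₂} - δ}`. -/
theorem critical_gronwall_two_parameter
    {E : Type*} [NormedAddCommGroup E] [NormedSpace ℝ E]
    (ℓ C₁ C₂ : ℝ) (hℓ : 0 < ℓ) (hC₁ : 0 ≤ C₁) (hC₂ : 0 ≤ C₂)
    (δ : ℝ) (hδ : 0 < δ) (hδ' : δ < Real.exp (-C₂)) :
    ∃ ηBar : ℝ, 0 < ηBar ∧
      ∀ η : ℝ, 0 < η → η < 1 → η < ηBar →
      ∀ f : ℝ → ℝ → E,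
        -- (i) boundedness
        (∃ B : ℝ, ∀ s t : ℝ, 0 ≤ s → s ≤ t → t ≤ 1 → ‖f s t‖ ≤ B) →
        -- (i) f_{0,0} = 0
        f 0 0 = 0 →
        -- (i) the increment bound, with M_{s,t} = sup_{r ∈ [s,t]} ‖f_{0,r}‖
        (∀ s t : ℝ, 0 ≤ s → s ≤ t → t ≤ 1 → t - s ≤ ℓ →
          ‖f s t‖ ≤
            C₁ * ((⨆ r : Icc s t, ‖f 0 (r : ℝ)‖) + η) * (t - s) ^ ((1 : ℝ) / 2)
            + C₂ * ((⨆ r : Icc s t, ‖f 0 (r : ℝ)‖) + η)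
                * |Real.log ((⨆ r : Icc s t, ‖f 0 (r : ℝ)‖) + η)| * (t - s)) →
        -- (ii)
        (∀ s t : ℝ, 0 ≤ s → s ≤ t → t ≤ 1 → ‖f 0 t‖ - ‖f 0 s‖ ≤ ‖f s t‖) →
        -- conclusion: sup_{t ∈ [0,1]} ‖f_{0,t}‖ ≤ η^{e^{-C₂} - δ}
        ∀ t : ℝ, 0 ≤ t → t ≤ 1 → ‖f 0 t‖ ≤ η ^ (Real.exp (-C₂) - δ) :=
  critical_gronwall_two_parameter_general ℓ C₁ C₂ hℓ hC₁ hC₂ δ hδ hδ'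
end

section
/- Critical Grönwall-type lemma, one-parameter version (Remark B.2): Let (E,‖·‖) be a normed real vector space, ℓ>0, C₁,C₂ ≥ 0 and δ ∈ (0, e^{−C₂}). There exists η̄ > 0, depending only on C₁, C₂, ℓ and δ, such that for every η ∈ (0, η̄) and every bounded function f : [0,1] → E with f(0) = 0 satisfying, for all 0 ≤ s ≤ t ≤ 1 with t−s ≤ ℓ, ‖f(t) − f(s)‖ ≤ C₁·(M_{s,t}+η)·(t−s)^{1/2} + C₂·(M_{s,t}+η)·|log(M_{s,t}+η)|·(t−s), where M_{s,t} := sup_{r∈[s,t]} ‖f(r)‖, one has sup_{t∈[0,1]} ‖f(t)‖ ≤ η^{e^{−C₂}−δ}. -/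
open Real Set Filter Topology

/-!
Let `M t = sup_{[0, t]} ‖f‖` and `L = -log η`. Cut `[0, 1]` into `N ≈ L` steps of length
`h = 1/N` and show by induction that `M (n h) + η ≤ η ^ γₙ`, where `γₙ = (1 + K h)⁻ⁿ` and `K` is
slightly larger than `C₂`. Within a step, as long as `M + η ≤ X := η ^ γₙ₊₁ ≤ e⁻¹`, monotonicity
of `x |log x|` on `(0, e⁻¹]` turns the increment bound into
`M ≤ M (n h) + X (C₁ √h + C₂ γₙ₊₁ L h)`, which is strictly below `X - η`: the log term is paid
for by `γₙ - γₙ₊₁ = K h γₙ₊₁` with `K > C₂`, and the √h term by `h ≳ C₁²/L²`. Since `f` is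
bounded, the increment bound also makes `M` uniformly continuous, so a bootstrap keeps
`M + η ≤ X` across the whole step. Finally `γ_N ≥ e⁻ᴷ`, and `K` is chosen with
`e⁻ᴷ = e^{-C₂} - δ`.
-/

lemma exp_neg_le_one_sub_add_sq {v : ℝ} (hv : 0 ≤ v) : exp (-v) ≤ 1 - v + v ^ 2 := by
  have hmul : exp (-v) * exp v = 1 := by rw [← exp_add, neg_add_cancel, exp_zero]
  nlinarith [quadratic_le_exp_of_nonneg hv, exp_pos (-v), pow_nonneg hv 3, pow_nonneg hv 4]

lemma mul_abs_log_le_mul_abs_log {x X : ℝ} (hx : 0 < x) (hxX : x ≤ X) (hX : X ≤ exp (-1)) :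
    x * |log x| ≤ X * |log X| := by
  have hlogX : log X ≤ -1 := by simpa using log_le_log (hx.trans_le hxX) hX
  have hlogx : log x ≤ log X := log_le_log hx hxX
  have hdiv : log X - log x ≤ X / x - 1 := by
    rw [← log_div (hx.trans_le hxX).ne' hx.ne']
    exact log_le_sub_one_of_pos (div_pos (hx.trans_le hxX) hx)
  have hdiv' : x * (log X - log x) ≤ X - x := by
    calc x * (log X - log x) ≤ x * (X / x - 1) := mul_le_mul_of_nonneg_left hdiv hx.le
      _ = X - x := by field_simp
  rw [abs_of_nonpos (by linarith), abs_of_nonpos (by linarith)]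
  nlinarith

lemma exp_neg_le_inv_one_add_div_pow {K : ℝ} (hK : 0 ≤ K) {n N : ℕ} (hn : n ≤ N) :
    exp (-K) ≤ ((1 + K / N) ^ n)⁻¹ := by
  have hpow : (1 + K / N) ^ n ≤ exp K := by
    calc (1 + K / N) ^ n ≤ (1 + K / N) ^ N :=
          pow_le_pow_right₀ (le_add_of_nonneg_right (by positivity)) hn
      _ ≤ exp K := by
          simpa [sub_eq_add_neg, neg_div] using
            one_sub_div_pow_le_exp_neg (n := N) (t := -K) (by linarith [N.cast_nonneg (α := ℝ)])
  rw [exp_neg]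
  exact inv_anti₀ (by positivity) hpow

lemma bootstrap_le {g : ℝ → ℝ} {a b X w u : ℝ} (hu : 0 < u)
    (hjump : ∀ s t, a ≤ s → s ≤ t → t ≤ b → t - s ≤ u → g t ≤ g s + w)
    (hgap : ∀ t, a ≤ t → t ≤ b → g t ≤ X → g t ≤ X - w)
    (ha : g a ≤ X) {t : ℝ} (hat : a ≤ t) (htb : t ≤ b) : g t ≤ X := by
  have hsteps : ∀ k : ℕ, ∀ t, a ≤ t → t ≤ b → t ≤ a + k * u → g t ≤ X := by
    intro k
    induction k with
    | zero => intro t hat _ ht; simpa [le_antisymm (by simpa using ht) hat] using ha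
    | succ k ih =>
      intro t hat htb ht
      by_cases htk : t ≤ a + k * u
      · exact ih t hat htb htk
      have hs : a ≤ a + k * u := le_add_of_nonneg_right (by positivity)
      have hgs := hgap _ hs (by linarith) (ih _ hs (by linarith) le_rfl)
      have := hjump _ t hs (by linarith) htb (by push_cast at ht; linarith)
      linarith
  obtain ⟨k, hk⟩ := exists_nat_ge ((t - a) / u)
  exact hsteps k t hat htb (by rw [div_le_iff₀ hu] at hk; linarith)

lemma exp_neg_mul_add_le_one_sub {a γ K ε C₂ P c : ℝ} (ha : 0 ≤ a) (haγ : a ≤ γ) (hγ : γ ≤ 1)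
    (hε : 0 ≤ ε) (hC₂ : 0 ≤ C₂) (hK : C₂ + ε ≤ K) (hP : 0 ≤ P)
    (hKP : (K * P) ^ 2 ≤ a * ε * P / 4) (hc : c ≤ a * ε * P / 4) :
    exp (-(γ * K * P)) + c + C₂ * γ * P ≤ 1 - a * ε * P / 2 := by
  have hγ0 : 0 ≤ γ := ha.trans haγ
  have hKP0 : 0 ≤ K * P := mul_nonneg (by linarith) hP
  have hv0 : 0 ≤ γ * K * P := by rw [mul_assoc]; positivity
  have hvK : γ * K * P ≤ K * P := by nlinarith
  have hvsq : (γ * K * P) ^ 2 ≤ (K * P) ^ 2 := pow_le_pow_left₀ hv0 hvK 2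
  have hvlow : C₂ * γ * P + a * ε * P ≤ γ * K * P := by
    nlinarith [mul_le_mul_of_nonneg_right hK (mul_nonneg hγ0 hP),
      mul_le_mul_of_nonneg_right haγ (mul_nonneg hε hP)]
  linarith [exp_neg_le_one_sub_add_sq hv0]

lemma exists_nat_inv_mem_Icc {x : ℝ} (hx0 : 0 < x) (hx1 : x ≤ 1) :
    ∃ N : ℕ, 0 < N ∧ (N : ℝ)⁻¹ ∈ Icc (x / 2) x := by
  have hone : 1 ≤ x⁻¹ := one_le_inv₀ hx0 |>.2 hx1
  have hge : x⁻¹ ≤ ⌈x⁻¹⌉₊ := Nat.le_ceil _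
  have hlt : (⌈x⁻¹⌉₊ : ℝ) < x⁻¹ + 1 := Nat.ceil_lt_add_one (by positivity)
  have hpos : (0 : ℝ) < ⌈x⁻¹⌉₊ := by linarith
  refine ⟨⌈x⁻¹⌉₊, by exact_mod_cast hpos, ?_, inv_le_of_inv_le₀ hx0 hge⟩
  rw [le_inv_comm₀ (by positivity) hpos, inv_div, div_eq_mul_inv]
  linarith

lemma eventually_exists_grid {ℓ C₁ a ε K : ℝ} (hℓ : 0 < ℓ) (ha : 0 < a) (hε : 0 < ε)
    (hK : 0 < K) :
    ∀ᶠ L in atTop, 1 ≤ a * L ∧ ∃ N : ℕ, 0 < N ∧ (N : ℝ)⁻¹ ≤ ℓ ∧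
      K ^ 2 * L * (N : ℝ)⁻¹ ≤ a * ε / 4 ∧
      C₁ * ((N : ℝ)⁻¹) ^ ((1 : ℝ) / 2) ≤ a * ε * (L * (N : ℝ)⁻¹) / 4 := by
  -- `1/N ≈ c/L`: the quadratic error of `exp` needs `1/N ≲ 1/L`, absorbing `C₁ √(1/N)` needs
  -- `1/N ≳ C₁²/L²`.
  set c := a * ε / (4 * K ^ 2)
  have hc : 0 < c := by positivity
  refine eventually_atTop.2
    ⟨max (max c (c / ℓ)) (max a⁻¹ (32 * C₁ ^ 2 / (a ^ 2 * ε ^ 2 * c))), fun L hL => ?_⟩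
  simp only [max_le_iff] at hL
  obtain ⟨⟨hcL, hcℓ⟩, haL, hC₁L⟩ := hL
  have hL0 : 0 < L := (inv_pos.2 ha).trans_le haL
  obtain ⟨N, hN, hlo, hhi⟩ :=
    exists_nat_inv_mem_Icc (x := c / L) (by positivity) ((div_le_one hL0).2 hcL)
  set h := (N : ℝ)⁻¹
  have hh : 0 < h := by positivity
  refine ⟨(inv_le_iff_one_le_mul₀' ha).1 haL, N, hN, ?_, ?_, ?_⟩
  · exact hhi.trans ((div_le_iff₀ hL0).2 (by rwa [div_le_iff₀' hℓ] at hcℓ))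
  · calc K ^ 2 * L * h ≤ K ^ 2 * L * (c / L) := by gcongr
      _ = a * ε / 4 := by simp only [c]; field_simp
  · have hsq : C₁ ^ 2 ≤ (a * ε * L / 4) ^ 2 * h := by
      calc C₁ ^ 2 ≤ a ^ 2 * ε ^ 2 * c / 32 * L := by
            rw [div_le_iff₀ (by positivity)] at hC₁L
            linarith
        _ = (a * ε * L / 4) ^ 2 * (c / L / 2) := by field_simp; norm_num
        _ ≤ (a * ε * L / 4) ^ 2 * h := by gcongr
    have hC₁ : C₁ ≤ a * ε * L / 4 * √h := by
      calc C₁ ≤ √((a * ε * L / 4) ^ 2 * h) := (le_abs_self C₁).trans (abs_le_sqrt hsq)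
        _ = a * ε * L / 4 * √h := by rw [sqrt_mul (by positivity), sqrt_sq (by positivity)]
    calc C₁ * h ^ ((1 : ℝ) / 2) = C₁ * √h := by rw [sqrt_eq_rpow]
      _ ≤ a * ε * L / 4 * √h * √h := by gcongr
      _ = a * ε * (L * h) / 4 := by rw [mul_assoc _ √h, mul_self_sqrt hh.le]; ring

noncomputable def supNormOn {E : Type*} [Norm E] (f : ℝ → E) (s t : ℝ) : ℝ := ⨆ r : Icc s t, ‖f r‖

section supNormOn

variable {E : Type*} [SeminormedAddGroup E] {f : ℝ → E} {B s t : ℝ}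

lemma supNormOn_le {c : ℝ} (hst : s ≤ t) (h : ∀ r ∈ Icc s t, ‖f r‖ ≤ c) :
    supNormOn f s t ≤ c :=
  have : Nonempty (Icc s t) := (nonempty_Icc.2 hst).to_subtype
  ciSup_le fun r => h r r.2

lemma norm_le_supNormOn (hB : ∀ t, 0 ≤ t → t ≤ 1 → ‖f t‖ ≤ B) (hs : 0 ≤ s) (ht : t ≤ 1)
    {r : ℝ} (hr : r ∈ Icc s t) : ‖f r‖ ≤ supNormOn f s t :=
  le_ciSup (f := fun r : Icc s t => ‖f r‖)
    ⟨B, by rintro _ ⟨r, rfl⟩; exact hB r (hs.trans r.2.1) (r.2.2.trans ht)⟩ ⟨r, hr⟩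

lemma supNormOn_nonneg (hB : ∀ t, 0 ≤ t → t ≤ 1 → ‖f t‖ ≤ B) (hs : 0 ≤ s) (hst : s ≤ t)
    (ht : t ≤ 1) : 0 ≤ supNormOn f s t :=
  (norm_nonneg _).trans (norm_le_supNormOn hB hs ht ⟨le_rfl, hst⟩)

lemma supNormOn_le_supNormOn (hB : ∀ t, 0 ≤ t → t ≤ 1 → ‖f t‖ ≤ B) {s' t' : ℝ}
    (hs' : 0 ≤ s') (hs : s' ≤ s) (hst : s ≤ t) (ht : t ≤ t') (ht' : t' ≤ 1) :
    supNormOn f s t ≤ supNormOn f s' t' :=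
  supNormOn_le hst fun _ hr => norm_le_supNormOn hB hs' ht' ⟨hs.trans hr.1, hr.2.trans ht⟩

end supNormOn

def IncrementBound {E : Type*} [Norm E] [Sub E] (f : ℝ → E) (ℓ C₁ C₂ η : ℝ) : Prop :=
  ∀ s t : ℝ, 0 ≤ s → s ≤ t → t ≤ 1 → t - s ≤ ℓ →
    ‖f t - f s‖ ≤ C₁ * (supNormOn f s t + η) * (t - s) ^ ((1 : ℝ) / 2)
      + C₂ * (supNormOn f s t + η) * |log (supNormOn f s t + η)| * (t - s)

namespace IncrementBound

variable {E : Type*} [NormedAddCommGroup E] {f : ℝ → E} {ℓ C₁ C₂ η B : ℝ}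

lemma norm_sub_le (hinc : IncrementBound f ℓ C₁ C₂ η)
    (hB : ∀ t, 0 ≤ t → t ≤ 1 → ‖f t‖ ≤ B) (hC₁ : 0 ≤ C₁) (hC₂ : 0 ≤ C₂) (hη0 : 0 < η)
    (hη1 : η ≤ 1) {s t : ℝ} (hs : 0 ≤ s) (hst : s ≤ t) (ht : t ≤ 1) (hℓ : t - s ≤ ℓ) :
    ‖f t - f s‖ ≤ (B + 1) * (C₁ * (t - s) ^ ((1 : ℝ) / 2)
      + C₂ * max |log η| |log (B + 1)| * (t - s)) := by
  set m := supNormOn f s t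
  have hm0 : 0 ≤ m := supNormOn_nonneg hB hs hst ht
  have hmB : m ≤ B := supNormOn_le hst fun r hr => hB r (hs.trans hr.1) (hr.2.trans ht)
  have hlog : |log (m + η)| ≤ max |log η| |log (B + 1)| :=
    abs_le_max_abs_abs (log_le_log hη0 (by linarith)) (log_le_log (by linarith) (by linarith))
  have hmη : m + η ≤ B + 1 := by linarith
  have hts : 0 ≤ t - s := by linarith
  calc ‖f t - f s‖
      ≤ C₁ * (m + η) * (t - s) ^ ((1 : ℝ) / 2) + C₂ * (m + η) * |log (m + η)| * (t - s) :=
        hinc s t hs hst ht hℓ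
    _ ≤ C₁ * (B + 1) * (t - s) ^ ((1 : ℝ) / 2)
          + C₂ * (B + 1) * max |log η| |log (B + 1)| * (t - s) := by
        gcongr
        exact mul_nonneg hC₂ (by linarith)
    _ = _ := by ring

lemma exists_supNormOn_le_add (hinc : IncrementBound f ℓ C₁ C₂ η)
    (hB : ∀ t, 0 ≤ t → t ≤ 1 → ‖f t‖ ≤ B) (hℓ : 0 < ℓ) (hC₁ : 0 ≤ C₁) (hC₂ : 0 ≤ C₂)
    (hη0 : 0 < η) (hη1 : η ≤ 1) {w : ℝ} (hw : 0 < w) :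
    ∃ u > 0, ∀ s t, 0 ≤ s → s ≤ t → t ≤ 1 → t - s ≤ u →
      supNormOn f 0 t ≤ supNormOn f 0 s + w := by
  set ω : ℝ → ℝ := fun u => (B + 1) * (C₁ * u ^ ((1 : ℝ) / 2)
    + C₂ * max |log η| |log (B + 1)| * u)
  have hω : Tendsto ω (𝓝[>] 0) (𝓝 0) := by
    have : Continuous fun u : ℝ => u ^ ((1 : ℝ) / 2) := continuous_rpow_const (by norm_num)
    have hcont : Continuous ω := by fun_prop
    simpa [ω] using hcont.continuousWithinAt (s := Ioi 0) (x := 0) |>.tendsto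
  obtain ⟨u, hωu, hu0, huℓ⟩ := ((hω.eventually (gt_mem_nhds hw)).and (Ioo_mem_nhdsGT hℓ)).exists
  refine ⟨u, hu0, fun s t hs hst ht htu => supNormOn_le (hs.trans hst) fun r hr => ?_⟩
  have hB0 : 0 ≤ B := (norm_nonneg _).trans (hB 0 le_rfl zero_le_one)
  have hΛ : 0 ≤ max |log η| |log (B + 1)| := (abs_nonneg _).trans (le_max_left _ _)
  rcases le_or_gt r s with hrs | hsr
  · linarith [norm_le_supNormOn hB le_rfl (hst.trans ht) ⟨hr.1, hrs⟩]
  have hωr : ω (r - s) ≤ ω u := by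
    simp only [ω]
    gcongr <;> linarith [hr.2]
  calc ‖f r‖ ≤ ‖f s‖ + ‖f r - f s‖ := norm_le_norm_add_norm_sub' _ _
    _ ≤ supNormOn f 0 s + ω (r - s) := add_le_add
        (norm_le_supNormOn hB le_rfl (hst.trans ht) ⟨hs, le_rfl⟩)
        (hinc.norm_sub_le hB hC₁ hC₂ hη0 hη1 hs hsr.le (hr.2.trans ht) (by linarith [hr.2]))
    _ ≤ supNormOn f 0 s + w := by linarith

lemma supNormOn_le_add_of_le (hinc : IncrementBound f ℓ C₁ C₂ η)
    (hB : ∀ t, 0 ≤ t → t ≤ 1 → ‖f t‖ ≤ B) (hC₁ : 0 ≤ C₁) (hC₂ : 0 ≤ C₂) (hη0 : 0 < η)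
    {s T h X : ℝ} (hs : 0 ≤ s) (hsT : s ≤ T) (hT : T ≤ 1) (hTh : T - s ≤ h) (hhℓ : h ≤ ℓ)
    (hTX : supNormOn f 0 T + η ≤ X) (hX : X ≤ exp (-1)) :
    supNormOn f 0 T ≤ supNormOn f 0 s + X * (C₁ * h ^ ((1 : ℝ) / 2) + C₂ * |log X| * h) := by
  have hT0 := supNormOn_nonneg hB le_rfl (hs.trans hsT) hT
  have hX0 : 0 < X := by linarith
  have hh : 0 ≤ h := by linarith
  refine supNormOn_le (hs.trans hsT) fun r hr => ?_
  rcases le_or_gt r s with hrs | hsr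
  · have : 0 ≤ X * (C₁ * h ^ ((1 : ℝ) / 2) + C₂ * |log X| * h) := by positivity
    linarith [norm_le_supNormOn hB le_rfl (hsT.trans hT) ⟨hr.1, hrs⟩]
  set m := supNormOn f s r
  have hm0 : 0 ≤ m := supNormOn_nonneg hB hs hsr.le (hr.2.trans hT)
  have hmX : m + η ≤ X := by
    linarith [supNormOn_le_supNormOn hB le_rfl hs hsr.le hr.2 hT]
  have hφ : (m + η) * |log (m + η)| ≤ X * |log X| :=
    mul_abs_log_le_mul_abs_log (by linarith) hmX hX
  calc ‖f r‖ ≤ ‖f s‖ + ‖f r - f s‖ := norm_le_norm_add_norm_sub' _ _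
    _ ≤ supNormOn f 0 s + (C₁ * (m + η) * (r - s) ^ ((1 : ℝ) / 2)
          + C₂ * ((m + η) * |log (m + η)|) * (r - s)) := by
        rw [← mul_assoc C₂]
        exact add_le_add (norm_le_supNormOn hB le_rfl (hsT.trans hT) ⟨hs, le_rfl⟩)
          (hinc s r hs hsr.le (hr.2.trans hT) (by linarith [hr.2]))
    _ ≤ supNormOn f 0 s + (C₁ * X * h ^ ((1 : ℝ) / 2) + C₂ * (X * |log X|) * h) := by
        gcongr
        · linarith [hr.2]
        · linarith [hr.2]
    _ = supNormOn f 0 s + X * (C₁ * h ^ ((1 : ℝ) / 2) + C₂ * |log X| * h) := by ring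

lemma supNormOn_add_le_of_lt (hinc : IncrementBound f ℓ C₁ C₂ η)
    (hB : ∀ t, 0 ≤ t → t ≤ 1 → ‖f t‖ ≤ B) (hℓ : 0 < ℓ) (hC₁ : 0 ≤ C₁) (hC₂ : 0 ≤ C₂)
    (hη0 : 0 < η) (hη1 : η ≤ 1) {s h X : ℝ} (hs : 0 ≤ s) (hh : 0 ≤ h) (hsh : s + h ≤ 1)
    (hhℓ : h ≤ ℓ) (hX0 : 0 < X) (hX : X ≤ exp (-1))
    (hgap : supNormOn f 0 s + η + X * (C₁ * h ^ ((1 : ℝ) / 2) + C₂ * |log X| * h) < X) :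
    supNormOn f 0 (s + h) + η ≤ X := by
  set w := X - (supNormOn f 0 s + η + X * (C₁ * h ^ ((1 : ℝ) / 2) + C₂ * |log X| * h))
  obtain ⟨u, hu, hjump⟩ := hinc.exists_supNormOn_le_add hB hℓ hC₁ hC₂ hη0 hη1 (w := w)
    (by simp only [w]; linarith)
  have hterm : 0 ≤ X * (C₁ * h ^ ((1 : ℝ) / 2) + C₂ * |log X| * h) := by positivity
  refine bootstrap_le (g := fun T => supNormOn f 0 T + η) (w := w) hu ?_ ?_ (by linarith)
    (le_add_of_nonneg_right hh) le_rfl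
  · intro s' t' hs' hst' ht' hu'
    linarith [hjump s' t' (hs.trans hs') hst' (ht'.trans hsh) hu']
  · intro T hsT hTh hTX
    linarith [hinc.supNormOn_le_add_of_le hB hC₁ hC₂ hη0 hs hsT (hTh.trans hsh)
      (by linarith) hhℓ hTX hX]

lemma supNormOn_add_le_exp_of_le_exp (hinc : IncrementBound f ℓ C₁ C₂ η)
    (hB : ∀ t, 0 ≤ t → t ≤ 1 → ‖f t‖ ≤ B) (hC₁ : 0 ≤ C₁) (hC₂ : 0 ≤ C₂) (hη0 : 0 < η)
    (hη1 : η ≤ 1) {a γ K ε L s h : ℝ} (ha : 0 < a) (haγ : a ≤ γ) (hγ : γ ≤ 1) (haL : 1 ≤ a * L)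
    (hε : 0 < ε) (hK : C₂ + ε ≤ K) (hs : 0 ≤ s) (hh : 0 < h) (hsh : s + h ≤ 1) (hhℓ : h ≤ ℓ)
    (hKh : K ^ 2 * L * h ≤ a * ε / 4) (hC₁h : C₁ * h ^ ((1 : ℝ) / 2) ≤ a * ε * (L * h) / 4)
    (hprev : supNormOn f 0 s + η ≤ exp (-(γ * (1 + K * h) * L))) :
    supNormOn f 0 (s + h) + η ≤ exp (-(γ * L)) := by
  set X := exp (-(γ * L))
  have hL : 0 < L := pos_of_mul_pos_right (by linarith) ha.le
  have hγL : 1 ≤ γ * L := haL.trans (by gcongr)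
  have hX : X ≤ exp (-1) := exp_le_exp.2 (by linarith)
  have hlogX : |log X| = γ * L := by rw [log_exp, abs_neg, abs_of_nonneg (by linarith)]
  have hprev' : supNormOn f 0 s + η ≤ X * exp (-(γ * K * (L * h))) := by
    rw [← exp_add]
    convert hprev using 2
    ring
  have hKP : (K * (L * h)) ^ 2 ≤ a * ε * (L * h) / 4 := by
    nlinarith [mul_le_mul_of_nonneg_right hKh (by positivity : (0 : ℝ) ≤ L * h)]
  have harith := exp_neg_mul_add_le_one_sub ha.le haγ hγ hε.le hC₂ hK (by positivity) hKP hC₁h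
  refine hinc.supNormOn_add_le_of_lt hB (hh.trans_le hhℓ) hC₁ hC₂ hη0 hη1 hs hh.le hsh hhℓ
    (exp_pos _) hX ?_
  rw [hlogX]
  have : 0 < X * (a * ε * (L * h) / 2) := by positivity
  nlinarith [mul_le_mul_of_nonneg_left harith (exp_pos (-(γ * L))).le]

theorem norm_add_le_exp_of_grid (hinc : IncrementBound f ℓ C₁ C₂ η)
    (hB : ∀ t, 0 ≤ t → t ≤ 1 → ‖f t‖ ≤ B) (hf0 : f 0 = 0) (hC₁ : 0 ≤ C₁) (hC₂ : 0 ≤ C₂)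
    {L K ε : ℝ} (hηL : η = exp (-L)) (hε : 0 < ε) (hK : C₂ + ε ≤ K) (haL : 1 ≤ exp (-K) * L)
    {N : ℕ} (hN : 0 < N) (hNℓ : (N : ℝ)⁻¹ ≤ ℓ)
    (hKN : K ^ 2 * L * (N : ℝ)⁻¹ ≤ exp (-K) * ε / 4)
    (hC₁N : C₁ * ((N : ℝ)⁻¹) ^ ((1 : ℝ) / 2) ≤ exp (-K) * ε * (L * (N : ℝ)⁻¹) / 4)
    {t : ℝ} (ht0 : 0 ≤ t) (ht1 : t ≤ 1) :
    ‖f t‖ + η ≤ exp (-(exp (-K) * L)) := by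
  set h : ℝ := (N : ℝ)⁻¹
  have hh : 0 < h := by positivity
  have hNh : (N : ℝ) * h = 1 := mul_inv_cancel₀ (by positivity)
  have hL : 0 < L := pos_of_mul_pos_right (by linarith) (exp_pos _).le
  have hη0 : 0 < η := hηL ▸ exp_pos _
  have hη1 : η ≤ 1 := hηL ▸ exp_le_one_iff.2 (by linarith)
  have hK0 : 0 ≤ K := by linarith
  set γ : ℕ → ℝ := fun n => ((1 + K / N) ^ n)⁻¹
  have hγa : ∀ n ≤ N, exp (-K) ≤ γ n := fun n hn => exp_neg_le_inv_one_add_div_pow hK0 hn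
  have hγ1 : ∀ n, γ n ≤ 1 := fun n =>
    inv_le_one_of_one_le₀ (one_le_pow₀ (le_add_of_nonneg_right (by positivity)))
  have hγsucc : ∀ n, γ (n + 1) * (1 + K * h) = γ n := fun n => by
    simp only [γ, pow_succ, mul_inv, div_eq_mul_inv, h]
    field_simp
  have key : ∀ n ≤ N, supNormOn f 0 (n * h) + η ≤ exp (-(γ n * L)) := by
    intro n
    induction n with
    | zero =>
      intro _
      have : supNormOn f 0 0 ≤ 0 :=
        supNormOn_le le_rfl fun r hr => by simp [le_antisymm hr.2 hr.1, hf0]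
      simpa [γ, hηL] using this
    | succ n ih =>
      intro hn
      have hnh : (n : ℝ) * h + h ≤ 1 := by
        rw [← hNh, ← add_one_mul]
        gcongr
        exact_mod_cast hn
      rw [Nat.cast_succ, add_one_mul]
      refine hinc.supNormOn_add_le_exp_of_le_exp hB hC₁ hC₂ hη0 hη1 (exp_pos _) (hγa _ hn)
        (hγ1 _) haL hε hK (by positivity) hh hnh hNℓ hKN hC₁N ?_
      rw [hγsucc]
      exact ih (by omega)
  calc ‖f t‖ + η ≤ supNormOn f 0 (N * h) + η := by
        rw [hNh]
        gcongr
        exact norm_le_supNormOn hB le_rfl le_rfl ⟨ht0, ht1⟩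
    _ ≤ exp (-(γ N * L)) := key N le_rfl
    _ ≤ exp (-(exp (-K) * L)) := by gcongr; exact hγa N le_rfl

end IncrementBound

theorem critical_gronwall_one_parameter_general
    {E : Type*} [NormedAddCommGroup E]
    (ℓ C₁ C₂ : ℝ) (hℓ : 0 < ℓ) (hC₁ : 0 ≤ C₁) (hC₂ : 0 ≤ C₂)
    (δ : ℝ) (hδ : 0 < δ) (hδ' : δ < Real.exp (-C₂)) :
    ∃ ηBar : ℝ, 0 < ηBar ∧
      ∀ η : ℝ, 0 < η → η < 1 → η < ηBar →
      ∀ f : ℝ → E,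
        -- boundedness
        (∃ B : ℝ, ∀ t : ℝ, 0 ≤ t → t ≤ 1 → ‖f t‖ ≤ B) →
        -- f(0) = 0
        f 0 = 0 →
        -- the increment bound, with M_{s,t} = sup_{r ∈ [s,t]} ‖f r‖
        (∀ s t : ℝ, 0 ≤ s → s ≤ t → t ≤ 1 → t - s ≤ ℓ →
          ‖f t - f s‖ ≤
            C₁ * ((⨆ r : Icc s t, ‖f (r : ℝ)‖) + η) * (t - s) ^ ((1 : ℝ) / 2)
            + C₂ * ((⨆ r : Icc s t, ‖f (r : ℝ)‖) + η)
                * |Real.log ((⨆ r : Icc s t, ‖f (r : ℝ)‖) + η)| * (t - s)) →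
        -- conclusion: sup_{t ∈ [0,1]} ‖f t‖ ≤ η^{e^{-C₂} - δ}
        ∀ t : ℝ, 0 ≤ t → t ≤ 1 → ‖f t‖ ≤ η ^ (Real.exp (-C₂) - δ) := by
  set K := -log (exp (-C₂) - δ)
  have hα : exp (-K) = exp (-C₂) - δ := by rw [neg_neg, exp_log (by linarith)]
  have hC₂K : C₂ < K := by
    rw [← neg_lt_neg_iff, ← exp_lt_exp, hα]
    linarith
  obtain ⟨L₀, hL₀⟩ := eventually_atTop.1 <|
    eventually_exists_grid (C₁ := C₁) (K := K) hℓ (exp_pos (-K)) (sub_pos.2 hC₂K) (by linarith)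
  refine ⟨exp (-L₀), exp_pos _, fun η hη0 _ hηL₀ f ⟨B, hB⟩ hf0 hinc t ht0 ht1 => ?_⟩
  have hL : L₀ ≤ -log η := le_neg.2 ((log_lt_iff_lt_exp hη0).2 hηL₀).le
  obtain ⟨haL, N, hN, hNℓ, hKN, hC₁N⟩ := hL₀ _ hL
  have hf := IncrementBound.norm_add_le_exp_of_grid hinc hB hf0 hC₁ hC₂
    (by rw [neg_neg, exp_log hη0]) (sub_pos.2 hC₂K) (by linarith) haL hN hNℓ hKN hC₁N ht0 ht1
  rw [hα, show -((exp (-C₂) - δ) * -log η) = log η * (exp (-C₂) - δ) by ring] at hf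
  rw [rpow_def_of_pos hη0]
  linarith

/-- **Critical Grönwall-type lemma, one-parameter version** (Remark B.2).
Let `(E,‖·‖)` be a normed real vector space, `ℓ > 0`, `C₁, C₂ ≥ 0` and
`δ ∈ (0, e^{-C₂})`.  There exists `ηBar > 0` (depending only on `C₁, C₂, ℓ, δ`) such
that for every `η ∈ (0, ηBar)` (with `η ∈ (0,1)`) and every bounded `f : [0,1] → E`
with `f 0 = 0` satisfying the increment bound on intervals of length at most `ℓ`
(with `M_{s,t} = sup_{r ∈ [s,t]} ‖f r‖`), one has
`sup_{t ∈ [0,1]} ‖f t‖ ≤ η^{e^{-C₂} - δ}`. -/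
theorem critical_gronwall_one_parameter
    {E : Type*} [NormedAddCommGroup E] [NormedSpace ℝ E]
    (ℓ C₁ C₂ : ℝ) (hℓ : 0 < ℓ) (hC₁ : 0 ≤ C₁) (hC₂ : 0 ≤ C₂)
    (δ : ℝ) (hδ : 0 < δ) (hδ' : δ < Real.exp (-C₂)) :
    ∃ ηBar : ℝ, 0 < ηBar ∧
      ∀ η : ℝ, 0 < η → η < 1 → η < ηBar →
      ∀ f : ℝ → E,
        -- boundedness
        (∃ B : ℝ, ∀ t : ℝ, 0 ≤ t → t ≤ 1 → ‖f t‖ ≤ B) →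
        -- f(0) = 0
        f 0 = 0 →
        -- the increment bound, with M_{s,t} = sup_{r ∈ [s,t]} ‖f r‖
        (∀ s t : ℝ, 0 ≤ s → s ≤ t → t ≤ 1 → t - s ≤ ℓ →
          ‖f t - f s‖ ≤
            C₁ * ((⨆ r : Icc s t, ‖f (r : ℝ)‖) + η) * (t - s) ^ ((1 : ℝ) / 2)
            + C₂ * ((⨆ r : Icc s t, ‖f (r : ℝ)‖) + η)
                * |Real.log ((⨆ r : Icc s t, ‖f (r : ℝ)‖) + η)| * (t - s)) →
        -- conclusion: sup_{t ∈ [0,1]} ‖f t‖ ≤ η^{e^{-C₂} - δ}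
        ∀ t : ℝ, 0 ≤ t → t ≤ 1 → ‖f t‖ ≤ η ^ (Real.exp (-C₂) - δ) :=
  critical_gronwall_one_parameter_general ℓ C₁ C₂ hℓ hC₁ hC₂ δ hδ hδ'
end

section
/- Lower bound for approximating a sequence with prescribed dyadic growth by bounded sequences (optimality argument, Section 2.4): Let γ ∈ (−1,0), C₀ > 0 and J ∈ ℕ. There exist constants c > 0 and K₀ ≥ 1 such that for every real K ≥ K₀ and all sequences (a_j)_{j∈ℕ} and (b_j)_{j∈ℕ} of nonnegative real numbers satisfying a_j ≥ C₀·2^{−jγ} for all j ≥ J and b_j ≤ K for all j ∈ ℕ, one has sup_{j∈ℕ} 2^{j(γ−1)}·|a_j − b_j| ≥ c·K^{1/γ}. -/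
open Real

/-!
Put `q = 2^{-γ} > 1`, so that `a_j ≥ C₀ q^j` for `j ≥ J` and the weight is
`2^{j(γ-1)} = (q^j)^p` with `p = (1-γ)/γ < 0`. Choose `j ≥ J` with `2K ≤ C₀ q^j ≤ A K`,
`A = 2 q^{J+1} / C₀`: then `|a_j - b_j| ≥ K`, and since `p < 0`,
`2^{j(γ-1)} |a_j - b_j| ≥ (A K)^p K = A^p K^{1/γ}`.
-/

theorem exists_ge_pow_near {R : Type*} [Semiring R] [LinearOrder R] [IsStrictOrderedRing R]
    [Archimedean R] [ExistsAddOfLE R] {q x : R} (hq : 1 < q) (hx : 1 ≤ x) (J : ℕ) :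
    ∃ j : ℕ, J ≤ j ∧ x ≤ q ^ j ∧ q ^ j ≤ q ^ (J + 1) * x := by
  obtain ⟨n, hnx, hxn⟩ := exists_nat_pow_near hx hq
  refine ⟨J + (n + 1), by omega, ?_, ?_⟩
  · rw [pow_add]
    exact hxn.le.trans (le_mul_of_one_le_left (by positivity) (one_le_pow₀ hq.le))
  · rw [show J + (n + 1) = (J + 1) + n by omega, pow_add]
    exact mul_le_mul_of_nonneg_left hnx (by positivity)

theorem rpow_mul_rpow_add_one_le {p t A K d : ℝ} (hp : p ≤ 0) (ht : 0 < t) (hA : 0 < A)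
    (hK : 0 < K) (htK : t ≤ A * K) (hKd : K ≤ d) :
    A ^ p * K ^ (p + 1) ≤ t ^ p * d :=
  calc A ^ p * K ^ (p + 1) = (A * K) ^ p * K := by
        rw [mul_rpow hA.le hK.le, rpow_add_one hK.ne', mul_assoc]
    _ ≤ t ^ p * d := mul_le_mul (rpow_le_rpow_of_nonpos ht htK hp) hKd hK.le (by positivity)

theorem rpow_natCast_mul_sub_one {x γ : ℝ} (hx : 0 ≤ x) (hγ : γ ≠ 0) (j : ℕ) :
    x ^ ((j : ℝ) * (γ - 1)) = ((x ^ (-γ)) ^ j) ^ ((1 - γ) / γ) := by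
  rw [← rpow_mul_natCast hx, ← rpow_mul hx]
  congr 1
  field_simp
  ring

/-- **Lower bound for approximating a sequence with prescribed dyadic growth by bounded
sequences** (optimality argument, Section 2.4).  Let `γ ∈ (-1,0)`, `C₀ > 0`, `J ∈ ℕ`.
There exist `c > 0` and `K₀ ≥ 1` such that for every `K ≥ K₀` and all nonnegative
sequences `(a_j)`, `(b_j)` with `a_j ≥ C₀ 2^{-jγ}` for `j ≥ J` and `b_j ≤ K` for all
`j`, one has `sup_j 2^{j(γ-1)} |a_j - b_j| ≥ c K^{1/γ}` (witnessed at some index `j`). -/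
theorem dyadic_approximation_lower_bound
    (γ : ℝ) (hγ : γ ∈ Set.Ioo (-1 : ℝ) 0) (C₀ : ℝ) (hC₀ : 0 < C₀) (J : ℕ) :
    ∃ c : ℝ, 0 < c ∧ ∃ K₀ : ℝ, 1 ≤ K₀ ∧
      ∀ K : ℝ, K₀ ≤ K →
      ∀ a b : ℕ → ℝ,
        (∀ j : ℕ, 0 ≤ a j) → (∀ j : ℕ, 0 ≤ b j) →
        (∀ j : ℕ, J ≤ j → C₀ * (2 : ℝ) ^ (-(j : ℝ) * γ) ≤ a j) →
        (∀ j : ℕ, b j ≤ K) →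
        ∃ j : ℕ, c * K ^ (1 / γ) ≤ (2 : ℝ) ^ ((j : ℝ) * (γ - 1)) * |a j - b j| := by
  have hγ0 : γ < 0 := hγ.2
  set q : ℝ := 2 ^ (-γ)
  have hq : 1 < q := one_lt_rpow one_lt_two (by linarith)
  set A : ℝ := q ^ (J + 1) * (2 / C₀)
  have hA : 0 < A := by positivity
  refine ⟨A ^ ((1 - γ) / γ), rpow_pos_of_pos hA _, max 1 C₀, le_max_left _ _, ?_⟩
  intro K hK a b _ _ haJ hbK
  have hK0 : 0 < K := one_pos.trans_le ((le_max_left _ _).trans hK)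
  have hx : 1 ≤ 2 * K / C₀ := by
    rw [le_div_iff₀ hC₀]
    linarith [(le_max_right 1 C₀).trans hK]
  obtain ⟨j, hJj, hxj, hjx⟩ := exists_ge_pow_near hq hx J
  have hgap : K ≤ |a j - b j| := by
    have haj := haJ j hJj
    rw [neg_mul_comm, mul_comm (j : ℝ), rpow_mul_natCast zero_le_two] at haj
    rw [div_le_iff₀ hC₀] at hxj
    linarith [le_abs_self (a j - b j), hbK j]
  refine ⟨j, ?_⟩
  calc A ^ ((1 - γ) / γ) * K ^ (1 / γ) = A ^ ((1 - γ) / γ) * K ^ ((1 - γ) / γ + 1) := by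
        rw [div_add_one hγ0.ne, sub_add_cancel]
    _ ≤ (q ^ j) ^ ((1 - γ) / γ) * |a j - b j| :=
        rpow_mul_rpow_add_one_le (div_nonpos_of_nonneg_of_nonpos (by linarith) hγ0.le)
          (by positivity) hA hK0 (hjx.trans_eq (by ring)) hgap
    _ = (2 : ℝ) ^ ((j : ℝ) * (γ - 1)) * |a j - b j| := by
        rw [rpow_natCast_mul_sub_one zero_le_two hγ0.ne]
end

section
/- Analyticity of the power-weighted integral of a Schwartz function (proof of Lemma A.6): Let h : ℝ → ℝ be a Schwartz function. Then the function H(η) := ∫₀^∞ h(−y)·y^η dy is real-analytic at every point η ∈ (−1,0]. -/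
open Real MeasureTheory

lemma schwartz_aux_mellin_eq (h : SchwartzMap ℝ ℝ) (e : ℝ) :
    (mellin (fun y : ℝ => (h (-y) : ℂ)) (↑e + 1)).re
      = ∫ y in Set.Ioi (0 : ℝ), h (-y) * y ^ e := by
  have : mellin (fun y : ℝ => (h (-y) : ℂ)) (↑e + 1)
      = ((∫ y in Set.Ioi (0 : ℝ), h (-y) * y ^ e : ℝ) : ℂ) := by
    rw [mellin]
    have heq : ∀ y ∈ Set.Ioi (0 : ℝ),
        (y : ℂ) ^ ((e : ℂ) + 1 - 1) • ((h (-y) : ℝ) : ℂ)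
          = ((h (-y) * y ^ e : ℝ) : ℂ) := by
      intro y hy
      rw [add_sub_cancel_right, smul_eq_mul, ← Complex.ofReal_cpow (le_of_lt hy)]
      push_cast
      ring
    rw [setIntegral_congr_fun measurableSet_Ioi heq]
    exact integral_ofReal
  rw [this, Complex.ofReal_re]

/-- **Analyticity of the power-weighted integral of a Schwartz function**
(proof of Lemma A.6).  Let `h` be a Schwartz function on `ℝ`.  Then
`H(η) = ∫₀^∞ h(-y) y^η dy` is real-analytic at every `η ∈ (-1,0]`. -/
theorem schwartz_power_weight_integral_analytic
    (h : SchwartzMap ℝ ℝ) :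
    ∀ η : ℝ, -1 < η → η ≤ 0 →
      AnalyticAt ℝ (fun e : ℝ => ∫ y in Set.Ioi (0 : ℝ), h (-y) * y ^ e) η := by
  intro η hη hη0
  set g : ℝ → ℂ := fun y => (h (-y) : ℂ) with hg
  have hgc : Continuous g := Complex.continuous_ofReal.comp (h.continuous.comp continuous_neg)
  have hloc : MeasureTheory.LocallyIntegrableOn g (Set.Ioi 0) :=
    (hgc.locallyIntegrable).locallyIntegrableOn _
  -- decay at infinity : for every a, g = O(y ^ (-a))
  have htop : ∀ a : ℝ, g =O[Filter.atTop] fun y : ℝ => y ^ (-a) := by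
    intro a
    have h1 : (fun x : ℝ => (h x : ℂ)) =O[Filter.cocompact ℝ] fun x => ‖x‖ ^ (-a) := by
      simpa [Asymptotics.isBigO_iff] using SchwartzMap.isBigO_cocompact_rpow h (-a)
    have hneg : Filter.Tendsto (fun y : ℝ => -y) Filter.atTop (Filter.cocompact ℝ) := by
      refine Filter.Tendsto.mono_right Filter.tendsto_neg_atTop_atBot ?_
      rw [cocompact_eq_atBot_atTop]; exact le_sup_left
    have h2 := h1.comp_tendsto hneg
    refine h2.congr' Filter.EventuallyEq.rfl ?_
    filter_upwards [Filter.eventually_gt_atTop (0 : ℝ)] with y hy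
    simp [Function.comp, Real.norm_eq_abs, abs_of_pos hy]
  -- boundedness near 0
  have hbot : g =O[nhdsWithin 0 (Set.Ioi 0)] fun y : ℝ => y ^ (-(0 : ℝ)) := by
    have h0 : Filter.Tendsto g (nhdsWithin 0 (Set.Ioi 0)) (nhds (g 0)) :=
      (hgc.tendsto 0).mono_left nhdsWithin_le_nhds
    refine (h0.isBigO_one ℝ).congr' Filter.EventuallyEq.rfl ?_
    filter_upwards with y; simp
  -- mellin g is analytic on the half-plane 0 < re s
  have hF : AnalyticAt ℂ (mellin g) (↑η + 1) := by
    have hdo : DifferentiableOn ℂ (mellin g) {s : ℂ | 0 < s.re} := fun s hs =>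
      (mellin_differentiableAt_of_isBigO_rpow hloc (htop (s.re + 1))
        (by simp [lt_add_one]) hbot hs).differentiableWithinAt
    refine hdo.analyticAt ?_
    have hopen : IsOpen {s : ℂ | 0 < s.re} := isOpen_lt continuous_const Complex.continuous_re
    exact hopen.mem_nhds (by simpa using by linarith : (0 : ℝ) < (↑η + 1 : ℂ).re)
  -- the real function e ↦ (mellin g (e+1)).re is real-analytic at η
  have hlin : AnalyticAt ℝ (fun e : ℝ => ((e : ℂ) + 1)) η :=
    (Complex.ofRealCLM.analyticAt η).add analyticAt_const
  have hreal : AnalyticAt ℝ (fun e : ℝ => (mellin g ((e : ℂ) + 1)).re) η := by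
    have h1 : AnalyticAt ℝ (fun e : ℝ => mellin g ((e : ℂ) + 1)) η :=
      AnalyticAt.comp (𝕜 := ℝ) (g := mellin g) (f := fun e : ℝ => (e : ℂ) + 1) (x := η)
        hF.restrictScalars hlin
    exact (Complex.reCLM.analyticAt _).comp h1
  refine hreal.congr ?_
  have hmem : Set.Ioi (-1 : ℝ) ∈ nhds η := isOpen_Ioi.mem_nhds hη
  filter_upwards [hmem] with e _
  exact schwartz_aux_mellin_eq h e
end

section
/- Non-vanishing of the power-weighted integral near any exponent (proof of Lemma A.6): Let h : ℝ → ℝ be a Schwartz function with ∫₀^∞ h(−y) dy ≠ 0. Then for every γ ∈ (−1,0) and every ε > 0 there exists η ∈ (−1,0) with |η − γ| < ε such that ∫₀^∞ h(−y)·y^η dy ≠ 0. -/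
/-!
Up to the shift `s = η + 1`, `η ↦ ∫₀^∞ h(-y) y^η dy` is the restriction to real points of the
Mellin transform of `t ↦ h(-t)`. Since `h(-t)` is bounded near `0` and decays faster than any
power at `+∞`, this Mellin transform is holomorphic on the half-plane `0 < re s`. If it vanished
on a real interval around `γ + 1`, the identity theorem would make it vanish at `s = 1`, where
it equals `∫₀^∞ h(-y) dy ≠ 0`.
-/

open Real MeasureTheory Complex Filter Asymptotics Set Topology

theorem mellin_ofReal_eq_ofReal_integral (f : ℝ → ℝ) (s : ℝ) :
    mellin (fun t ↦ (f t : ℂ)) s = ↑(∫ t in Ioi 0, f t * t ^ (s - 1)) := by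
  rw [mellin, ← integral_complex_ofReal]
  refine setIntegral_congr_fun measurableSet_Ioi fun t ht ↦ ?_
  rw [smul_eq_mul, ← ofReal_one, ← ofReal_sub, ← ofReal_cpow (le_of_lt ht), ← ofReal_mul, mul_comm]

theorem analyticOnNhd_mellin_of_isBigO_rpow {E : Type*} [NormedAddCommGroup E] [NormedSpace ℂ E]
    [CompleteSpace E] {f : ℝ → E}
    (hfc : LocallyIntegrableOn f (Ioi 0)) (hf_top : ∀ a : ℝ, f =O[atTop] (· ^ (-a)))
    (hf_bot : f =O[𝓝[>] 0] fun _ ↦ (1 : ℝ)) :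
    AnalyticOnNhd ℂ (mellin f) {s : ℂ | 0 < s.re} := by
  refine DifferentiableOn.analyticOnNhd (fun s hs ↦ ?_) (isOpen_lt continuous_const continuous_re)
  refine (mellin_differentiableAt_of_isBigO_rpow hfc (hf_top (s.re + 1)) (lt_add_one _) ?_ hs)
    |>.differentiableWithinAt
  simpa only [neg_zero, rpow_zero] using hf_bot

theorem SchwartzMap.isBigO_atTop_comp_neg_rpow (h : SchwartzMap ℝ ℝ) (a : ℝ) :
    (fun t ↦ h (-t)) =O[atTop] (· ^ (-a)) := by
  have hneg : Tendsto (fun t : ℝ ↦ -t) atTop (cocompact ℝ) :=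
    tendsto_neg_atTop_atBot.mono_right atBot_le_cocompact
  refine ((h.isBigO_cocompact_rpow (-a)).comp_tendsto hneg).trans_eventuallyEq ?_
  filter_upwards [eventually_ge_atTop 0] with t ht
  simp only [Function.comp_apply, norm_neg, Real.norm_of_nonneg ht]

theorem SchwartzMap.analyticOnNhd_mellin_comp_neg (h : SchwartzMap ℝ ℝ) :
    AnalyticOnNhd ℂ (mellin fun t ↦ (h (-t) : ℂ)) {s : ℂ | 0 < s.re} := by
  have hcont : Continuous fun t : ℝ ↦ (h (-t) : ℂ) := by fun_prop
  refine analyticOnNhd_mellin_of_isBigO_rpow (hcont.locallyIntegrable.locallyIntegrableOn _)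
    (fun a ↦ isBigO_ofReal_left.mpr (h.isBigO_atTop_comp_neg_rpow a)) ?_
  exact (hcont.tendsto 0).mono_left nhdsWithin_le_nhds |>.isBigO_one ℝ

theorem AnalyticOnNhd.eqOn_zero_of_forall_Ioo_eq_zero {F : ℂ → ℂ} {U : Set ℂ}
    (hF : AnalyticOnNhd ℂ F U) (hU : IsPreconnected U) {a b : ℝ} (hab : a < b)
    (hsub : ∀ x ∈ Ioo a b, (x : ℂ) ∈ U) (hzero : ∀ x ∈ Ioo a b, F x = 0) : EqOn F 0 U := by
  obtain ⟨c, hc⟩ := nonempty_Ioo.mpr hab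
  have hofReal : Tendsto ((↑) : ℝ → ℂ) (𝓝[≠] c) (𝓝[≠] (c : ℂ)) :=
    continuous_ofReal.continuousWithinAt.tendsto_nhdsWithin fun _ hx ↦ by simpa using hx
  have hev : ∀ᶠ x : ℝ in 𝓝[≠] c, F x = 0 :=
    eventually_nhdsWithin_of_eventually_nhds (mem_of_superset (Ioo_mem_nhds hc.1 hc.2) hzero)
  exact hF.eqOn_zero_of_preconnected_of_frequently_eq_zero hU (hsub c hc)
    (hofReal.frequently hev.frequently)

/-- **Non-vanishing of the power-weighted integral near any exponent**
(proof of Lemma A.6).  Let `h` be a Schwartz function on `ℝ` with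
`∫₀^∞ h(-y) dy ≠ 0`.  Then for every `γ ∈ (-1,0)` and every `ε > 0` there exists
`η ∈ (-1,0)` with `|η - γ| < ε` such that `∫₀^∞ h(-y) y^η dy ≠ 0`. -/
theorem schwartz_power_weight_integral_nonvanishing
    (h : SchwartzMap ℝ ℝ)
    (h0 : (∫ y in Set.Ioi (0 : ℝ), h (-y)) ≠ 0)
    (γ : ℝ) (hγ : γ ∈ Set.Ioo (-1 : ℝ) 0) (ε : ℝ) (hε : 0 < ε) :
    ∃ η : ℝ, -1 < η ∧ η < 0 ∧ |η - γ| < ε ∧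
      (∫ y in Set.Ioi (0 : ℝ), h (-y) * y ^ η) ≠ 0 := by
  obtain ⟨hγ₁, hγ₂⟩ := hγ
  by_contra! hvanish
  have hmellin_vanish : ∀ x ∈ Ioo (max 0 (γ + 1 - ε)) (min 1 (γ + 1 + ε)),
      mellin (fun t ↦ (h (-t) : ℂ)) x = 0 := by
    intro x hx
    simp only [mem_Ioo, max_lt_iff, lt_min_iff] at hx
    rw [mellin_ofReal_eq_ofReal_integral (fun t ↦ h (-t)),
      hvanish (x - 1) (by linarith) (by linarith) (abs_sub_lt_iff.mpr ⟨by linarith, by linarith⟩),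
      ofReal_zero]
  have hzero := h.analyticOnNhd_mellin_comp_neg.eqOn_zero_of_forall_Ioo_eq_zero
    (convex_halfSpace_re_gt 0).isPreconnected
    (max_lt (lt_min one_pos (by linarith)) (lt_min (by linarith) (by linarith)))
    (fun x hx ↦ by simpa using (le_max_left _ _).trans_lt hx.1) hmellin_vanish
    (show (1 : ℂ) ∈ {s : ℂ | 0 < s.re} by simp)
  rw [← ofReal_one, mellin_ofReal_eq_ofReal_integral (fun t ↦ h (-t))] at hzero
  simp only [sub_self, rpow_zero, mul_one, Pi.zero_apply, ofReal_eq_zero] at hzero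
  exact h0 hzero
end

section
/- Existence of functions with prescribed decay of their Littlewood–Paley-type blocks (Lemma A.6, elementarized): Let h : ℝ → ℝ be a Schwartz function with ∫₀^∞ h(−y) dy ≠ 0, let γ ∈ (−1,0) and ε > 0. Then there exist η ∈ (−1,0) with |η − γ| < ε, an index J ∈ ℕ, and constants c, C > 0 such that the function b(y) := y^η·1_{(0,1)}(y) satisfies: (a) for every j ∈ ℕ, sup_{x∈ℝ} |Δ_j b(x)| ≤ C·2^{−jη}; and (b) for every j ≥ J, sup_{x∈ℝ} |Δ_j b(x)| ≥ c·2^{−jη}; where Δ_j b(x) := ∫_ℝ 2^j·h(2^j(x−y))·b(y) dy. -/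
open Real MeasureTheory Set Filter Asymptotics Topology
open scoped SchwartzMap

/-!
The Mellin transform `s ↦ ∫₀^∞ h(-t) t^(s-1) dt` is holomorphic on `re s > 0` and does not
vanish at `s = 1`, so its real zeros are isolated and we may pick `η` near `γ` with
`F := ∫₀^∞ h(-t) t^η dt ≠ 0`. Substituting `u = 2^j y` gives
`Δ_j b(x) = 2^{-jη} ∫₀^{2^j} h(2^j x - u) u^η du`. This integral is bounded uniformly in `x`
and `j`, because `h` is bounded and integrable and `u^η` is integrable near `0`; at `x = 0` it
tends to `F` as `j → ∞`.
-/

theorem mellin_ofReal (f : ℝ → ℝ) (σ : ℝ) :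
    mellin (fun t => (f t : ℂ)) σ = ↑(∫ t in Ioi 0, f t * t ^ (σ - 1)) := by
  rw [mellin, ← integral_complex_ofReal]
  refine setIntegral_congr_fun measurableSet_Ioi fun t (ht : 0 < t) => ?_
  rw [smul_eq_mul, ← Complex.ofReal_one, ← Complex.ofReal_sub, ← Complex.ofReal_cpow ht.le]
  push_cast
  ring

theorem AnalyticOnNhd.exists_mem_Ioo_ne_zero {g : ℂ → ℂ} {U : Set ℂ}
    (hg : AnalyticOnNhd ℂ g U) (hU : IsPreconnected U) {z₀ : ℂ} (hz₀ : z₀ ∈ U)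
    (hne : g z₀ ≠ 0) {l r : ℝ} (hlr : l < r) (hsub : ∀ x ∈ Ioo l r, (x : ℂ) ∈ U) :
    ∃ x ∈ Ioo l r, g x ≠ 0 := by
  by_contra! hzero
  obtain ⟨m, hm⟩ := nonempty_Ioo.mpr hlr
  have hofReal : Tendsto ((↑) : ℝ → ℂ) (𝓝[≠] m) (𝓝[≠] (m : ℂ)) :=
    tendsto_nhdsWithin_of_tendsto_nhds_of_eventually_within _
      Complex.continuous_ofReal.continuousWithinAt
      (eventually_nhdsWithin_of_forall fun x hx => Complex.ofReal_injective.ne hx)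
  have hfreq : ∃ᶠ z in 𝓝[≠] (m : ℂ), g z = 0 :=
    hofReal.frequently <| Eventually.frequently <|
      (eventually_nhdsWithin_of_eventually_nhds (Ioo_mem_nhds hm.1 hm.2)).mono hzero
  exact hne (hg.eqOn_zero_of_preconnected_of_frequently_eq_zero hU (hsub m hm) hfreq hz₀)

namespace SchwartzMap

theorem isBigO_atTop_rpow (f : 𝓢(ℝ, ℝ)) (s : ℝ) : (f : ℝ → ℝ) =O[atTop] (· ^ s) := by
  refine ((f.isBigO_cocompact_rpow s).mono atTop_le_cocompact).trans ?_
  refine IsBigO.of_bound 1 ?_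
  filter_upwards [eventually_ge_atTop 0] with x hx
  simp [Real.norm_of_nonneg hx]

theorem differentiableOn_mellin (f : 𝓢(ℝ, ℝ)) :
    DifferentiableOn ℂ (mellin fun t => (f t : ℂ)) {s | 0 < s.re} := by
  intro s hs
  refine (mellin_differentiableAt_of_isBigO_rpow (a := s.re + 1) (b := 0) ?_ ?_ (by linarith)
    ?_ hs).differentiableWithinAt
  · exact (Complex.continuous_ofReal.comp f.continuous).locallyIntegrable.locallyIntegrableOn _
  · exact Complex.isBigO_ofReal_left.mpr (f.isBigO_atTop_rpow _)
  · refine IsBigO.of_bound (SchwartzMap.seminorm ℝ 0 0 f) (Eventually.of_forall fun t => ?_)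
    simpa using f.norm_le_seminorm ℝ t

theorem exists_mem_Ioo_integral_mul_rpow_ne_zero (f : 𝓢(ℝ, ℝ))
    (hf : ∫ t in Ioi 0, f t ≠ 0) {l r : ℝ} (hl : -1 ≤ l) (hlr : l < r) :
    ∃ η ∈ Ioo l r, ∫ t in Ioi 0, f t * t ^ η ≠ 0 := by
  have hU : IsOpen {s : ℂ | 0 < s.re} := isOpen_lt continuous_const Complex.continuous_re
  have hone : mellin (fun t => (f t : ℂ)) 1 ≠ 0 := by
    rw [← Complex.ofReal_one, mellin_ofReal]
    simpa using hf
  obtain ⟨σ, hσ, hne⟩ := (f.differentiableOn_mellin.analyticOnNhd hU).exists_mem_Ioo_ne_zero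
    (convex_halfSpace_re_gt 0).isPreconnected (by simp) hone (add_lt_add_right hlr 1)
    fun x hx => show 0 < x by linarith [hx.1]
  refine ⟨σ - 1, ⟨by linarith [hσ.1], by linarith [hσ.2]⟩, fun h => hne ?_⟩
  rw [mellin_ofReal, h, Complex.ofReal_zero]

end SchwartzMap

section
variable {g : ℝ → ℝ} {η a M : ℝ}

theorem integral_mul_comp_mul_indicator_rpow (x : ℝ) (ha : 0 < a) :
    ∫ y, a * g (a * (x - y)) * (Ioo 0 1).indicator (fun z => z ^ η) y
      = a ^ (-η) * ∫ u in 0..a, g (a * x - u) * u ^ η := by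
  have hscale : EqOn (fun y => a * g (a * (x - y)) * y ^ η)
      (fun y => a ^ (-η) * (a * (g (a * x - a * y) * (a * y) ^ η))) (uIcc 0 1) := by
    intro y hy
    rw [uIcc_of_le zero_le_one] at hy
    dsimp only
    rw [mul_rpow ha.le hy.1, rpow_neg ha.le, mul_sub]
    field_simp
  have hind : (fun y => a * g (a * (x - y)) * (Ioo 0 1).indicator (fun z => z ^ η) y)
      = (Ioo 0 1).indicator fun y => a * g (a * (x - y)) * y ^ η :=
    funext fun y => (indicator_mul_right _ (fun y => a * g (a * (x - y))) _).symm
  rw [hind, integral_indicator measurableSet_Ioo, ← integral_Ioc_eq_integral_Ioo,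
    ← intervalIntegral.integral_of_le zero_le_one, intervalIntegral.integral_congr hscale,
    intervalIntegral.integral_const_mul, intervalIntegral.integral_const_mul,
    intervalIntegral.integral_comp_mul_left (fun u => g (a * x - u) * u ^ η) ha.ne']
  simp [ha.ne']

theorem integrable_indicator_Ioo_rpow (hη : -1 < η) :
    Integrable ((Ioo (0 : ℝ) 1).indicator fun z => z ^ η) :=
  ((intervalIntegral.integrableOn_Ioo_rpow_iff one_pos).mpr hη).integrable_indicator
    measurableSet_Ioo

theorem integral_indicator_Ioo_rpow (hη : -1 < η) :
    ∫ u, (Ioo (0 : ℝ) 1).indicator (fun z => z ^ η) u = 1 / (η + 1) := by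
  rw [integral_indicator measurableSet_Ioo, ← integral_Ioc_eq_integral_Ioo,
    ← intervalIntegral.integral_of_le zero_le_one, integral_rpow (Or.inl hη),
    zero_rpow (by linarith), one_rpow, sub_zero]

theorem abs_mul_rpow_le_indicator_add {u : ℝ} (hM : |g u| ≤ M) (hu : 0 < u) (hη0 : η ≤ 0) :
    |g u * u ^ η| ≤ M * (Ioo 0 1).indicator (fun z => z ^ η) u + |g u| := by
  rw [abs_mul, abs_of_pos (rpow_pos_of_pos hu η)]
  rcases lt_or_ge u 1 with hu1 | hu1
  · rw [indicator_of_mem (mem_Ioo.mpr ⟨hu, hu1⟩)]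
    nlinarith [rpow_pos_of_pos hu η, abs_nonneg (g u)]
  · rw [indicator_of_notMem (fun h => not_lt.mpr hu1 h.2 : u ∉ Ioo (0 : ℝ) 1)]
    nlinarith [rpow_le_one_of_one_le_of_nonpos hu1 hη0, abs_nonneg (g u)]

theorem integrableOn_Ioi_mul_rpow (hg : Integrable g) (hM : ∀ u, |g u| ≤ M)
    (hη : -1 < η) (hη0 : η ≤ 0) : IntegrableOn (fun u => g u * u ^ η) (Ioi 0) := by
  have hdom := ((integrable_indicator_Ioo_rpow hη).const_mul M).add hg.abs
  refine Integrable.mono' hdom.integrableOn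
    (hg.aestronglyMeasurable.restrict.mul (measurable_id.pow_const η).aestronglyMeasurable) ?_
  exact (ae_restrict_iff' measurableSet_Ioi).mpr
    (ae_of_all _ fun u hu => abs_mul_rpow_le_indicator_add (hM u) hu hη0)

theorem setIntegral_Ioi_abs_mul_rpow_le (hg : Integrable g) (hM : ∀ u, |g u| ≤ M)
    (hη : -1 < η) (hη0 : η ≤ 0) :
    ∫ u in Ioi 0, |g u * u ^ η| ≤ M / (η + 1) + ∫ u, |g u| := by
  have hdom := ((integrable_indicator_Ioo_rpow hη).const_mul M).add hg.abs
  calc ∫ u in Ioi 0, |g u * u ^ η|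
      ≤ ∫ u in Ioi 0, (M * (Ioo 0 1).indicator (fun z => z ^ η) u + |g u|) :=
        setIntegral_mono_on (integrableOn_Ioi_mul_rpow hg hM hη hη0).abs hdom.integrableOn
          measurableSet_Ioi fun u hu => abs_mul_rpow_le_indicator_add (hM u) hu hη0
    _ ≤ ∫ u, (M * (Ioo 0 1).indicator (fun z => z ^ η) u + |g u|) :=
        setIntegral_le_integral hdom (ae_of_all _ fun u => add_nonneg
          (mul_nonneg ((abs_nonneg _).trans (hM 0)) (indicator_nonneg (fun z hz =>
            (rpow_pos_of_pos hz.1 η).le) u)) (abs_nonneg _))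
    _ = M / (η + 1) + ∫ u, |g u| := by
        rw [integral_add ((integrable_indicator_Ioo_rpow hη).const_mul M) hg.abs,
          integral_const_mul, integral_indicator_Ioo_rpow hη, mul_one_div]

theorem abs_integral_mul_comp_mul_indicator_rpow_le (hg : Integrable g)
    (hM : ∀ u, |g u| ≤ M) (hη : -1 < η) (hη0 : η ≤ 0) (x : ℝ) (ha : 0 < a) :
    |∫ y, a * g (a * (x - y)) * (Ioo 0 1).indicator (fun z => z ^ η) y|
      ≤ (M / (η + 1) + ∫ u, |g u|) * a ^ (-η) := by
  have hshift : Integrable fun u => g (a * x - u) := hg.comp_sub_left _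
  have hlocal : |∫ u in 0..a, g (a * x - u) * u ^ η| ≤ M / (η + 1) + ∫ u, |g u| :=
    calc |∫ u in 0..a, g (a * x - u) * u ^ η|
        ≤ ∫ u in Ioc 0 a, |g (a * x - u) * u ^ η| := by
          rw [intervalIntegral.integral_of_le ha.le]
          exact abs_integral_le_integral_abs
      _ ≤ ∫ u in Ioi 0, |g (a * x - u) * u ^ η| :=
          setIntegral_mono_set (integrableOn_Ioi_mul_rpow hshift (fun u => hM _) hη hη0).abs
            (ae_of_all _ fun u => abs_nonneg _) Ioc_subset_Ioi_self.eventuallyLE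
      _ ≤ M / (η + 1) + ∫ u, |g (a * x - u)| :=
          setIntegral_Ioi_abs_mul_rpow_le hshift (fun u => hM _) hη hη0
      _ = M / (η + 1) + ∫ u, |g u| := by
          rw [integral_sub_left_eq_self (fun u => |g u|)]
  rw [integral_mul_comp_mul_indicator_rpow x ha, abs_mul,
    abs_of_pos (rpow_pos_of_pos ha _), mul_comm]
  exact mul_le_mul_of_nonneg_right hlocal (rpow_pos_of_pos ha _).le

theorem eventually_lt_abs_integral_mul_comp_mul_indicator_rpow
    (hg : IntegrableOn (fun u => g (-u) * u ^ η) (Ioi 0)) {c : ℝ}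
    (hc : c < |∫ u in Ioi 0, g (-u) * u ^ η|) :
    ∀ᶠ a in atTop,
      c * a ^ (-η) < |∫ y, a * g (a * (0 - y)) * (Ioo 0 1).indicator (fun z => z ^ η) y| := by
  have hlim := (intervalIntegral_tendsto_integral_Ioi 0 hg tendsto_id).abs
  filter_upwards [hlim.eventually (lt_mem_nhds hc), eventually_gt_atTop 0] with a hca ha
  rw [integral_mul_comp_mul_indicator_rpow 0 ha, abs_mul, abs_of_pos (rpow_pos_of_pos ha _),
    mul_comm, mul_zero]
  simpa only [zero_sub, id_eq] using mul_lt_mul_of_pos_left hca (rpow_pos_of_pos ha (-η))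

end

/-- **Existence of functions with prescribed decay of their Littlewood–Paley-type
blocks** (Lemma A.6, elementarized).  Let `h` be a Schwartz function on `ℝ` with
`∫₀^∞ h(-y) dy ≠ 0`, let `γ ∈ (-1,0)` and `ε > 0`.  Then there exist `η ∈ (-1,0)` with
`|η - γ| < ε`, an index `J ∈ ℕ`, and constants `c, C > 0` such that the function
`b(y) = y^η 1_{(0,1)}(y)` satisfies, with
`Δ_j b (x) = ∫ 2^j h (2^j (x - y)) b y dy`:
(a) `sup_x |Δ_j b (x)| ≤ C 2^{-jη}` for every `j`; and
(b) `sup_x |Δ_j b (x)| ≥ c 2^{-jη}` for every `j ≥ J`. -/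
theorem prescribed_littlewood_paley_block_decay
    (h : SchwartzMap ℝ ℝ)
    (h0 : (∫ y in Set.Ioi (0 : ℝ), h (-y)) ≠ 0)
    (γ : ℝ) (hγ : γ ∈ Set.Ioo (-1 : ℝ) 0) (ε : ℝ) (hε : 0 < ε) :
    ∃ η : ℝ, -1 < η ∧ η < 0 ∧ |η - γ| < ε ∧
      ∃ J : ℕ, ∃ c C : ℝ, 0 < c ∧ 0 < C ∧
        (∀ j : ℕ, ∀ x : ℝ,
          |∫ y : ℝ, (2 : ℝ) ^ j * h ((2 : ℝ) ^ j * (x - y))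
              * Set.indicator (Set.Ioo (0 : ℝ) 1) (fun z => z ^ η) y|
            ≤ C * (2 : ℝ) ^ (-(j : ℝ) * η)) ∧
        (∀ j : ℕ, J ≤ j →
          c * (2 : ℝ) ^ (-(j : ℝ) * η)
            ≤ ⨆ x : ℝ,
                |∫ y : ℝ, (2 : ℝ) ^ j * h ((2 : ℝ) ^ j * (x - y))
                    * Set.indicator (Set.Ioo (0 : ℝ) 1) (fun z => z ^ η) y|) := by
  obtain ⟨hγ1, hγ0⟩ := hγ
  -- `f t = h (-t)` definitionally, so `h0` says `∫₀^∞ f ≠ 0`.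
  set f := SchwartzMap.compCLMOfContinuousLinearEquiv ℝ (ContinuousLinearEquiv.neg ℝ) h
  obtain ⟨η, ⟨hlη, hηr⟩, hF⟩ := f.exists_mem_Ioo_integral_mul_rpow_ne_zero h0
    (l := max (-1) (γ - ε)) (r := min 0 (γ + ε)) (le_max_left _ _)
    (max_lt (lt_min (by norm_num) (by linarith)) (lt_min (by linarith) (by linarith)))
  have hη1 : -1 < η := (le_max_left _ _).trans_lt hlη
  have hη0 : η < 0 := hηr.trans_le (min_le_left _ _)
  have hηγ : |η - γ| < ε := abs_sub_lt_iff.mpr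
    ⟨by linarith [min_le_right 0 (γ + ε)], by linarith [le_max_right (-1) (γ - ε)]⟩
  obtain ⟨M, hMpos, hM⟩ : ∃ M > 0, ∀ x, |h x| ≤ M := by
    obtain ⟨M, hMpos, hM⟩ := h.decay 0 0
    exact ⟨M, hMpos, fun x => by simpa using hM x⟩
  have hpow (j : ℕ) : ((2 : ℝ) ^ j) ^ (-η) = 2 ^ (-(j : ℝ) * η) := by
    rw [← rpow_natCast_mul zero_le_two]; ring_nf
  have hupper (j : ℕ) (x : ℝ) := (hpow j) ▸ abs_integral_mul_comp_mul_indicator_rpow_le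
    h.integrable hM hη1 hη0.le x (pow_pos two_pos j)
  obtain ⟨J, hJ⟩ := eventually_atTop.mp <|
    (tendsto_pow_atTop_atTop_of_one_lt one_lt_two).eventually
      (eventually_lt_abs_integral_mul_comp_mul_indicator_rpow
        (integrableOn_Ioi_mul_rpow f.integrable (fun t => hM _) hη1 hη0.le)
        (half_lt_self (abs_pos.mpr hF)))
  have hCpos : 0 < M / (η + 1) + ∫ u, |h u| :=
    add_pos_of_pos_of_nonneg (div_pos hMpos (by linarith)) (integral_nonneg fun _ => abs_nonneg _)
  refine ⟨η, hη1, hη0, hηγ, J, _, _, half_pos (abs_pos.mpr hF), hCpos, hupper, fun j hj => ?_⟩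
  rw [← hpow]
  exact (hJ j hj).le.trans (le_ciSup ⟨_, forall_mem_range.mpr (hupper j)⟩ 0)
end
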